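/- arXiv:1706.03669 — 2 statements merged into one kernel-verified Lean document; each statement's English description precedes it below -/
import Mathlib

section
/- For every t ≥ 0, every compact subset K ⊂ S and every δ > 0, the map x ↦ ω'_{t,K,x}(δ) from D_loc(S) (with the local Skorokhod topology) to [0,∞] is upper semi-continuous. -/
open Filter Topology Set MeasureTheory
open scoped ENNReal NNReal

noncomputable section

namespace LocSkor

/-- Paths with values in the one-point compactification. -/
abbrev Path (S : Type*) := ℝ → OnePoint S

variable {S : Type*} [TopologicalSpace S]

/-- Distance between two points of `S^Δ`, with junk value `0` if one of them is `Δ`. -/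
noncomputable def dd (ρ : S → S → ℝ) : OnePoint S → OnePoint S → ℝ :=
  fun a b => Option.elim (show Option S from a) 0
    (fun a' => Option.elim (show Option S from b) 0 (fun b' => ρ a' b'))

/-- The set of times at which the path has already exploded. -/
def xiSet (x : Path S) : Set ℝ := {t : ℝ | x t = OnePoint.infty}

/-- The path explodes in finite time, i.e. `ξ(x) < ∞`. -/
def explodes (x : Path S) : Prop := (xiSet x).Nonempty

/-- The (real-valued) explosion time `ξ(x)`; junk value `0` if the path never explodes. -/
def xiR (x : Path S) : ℝ := sInf (xiSet x)

/-- The `[0,∞]`-valued explosion time `ξ(x)`. -/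
def xiE (x : Path S) : ℝ≥0∞ := ⨅ t ∈ xiSet x, ENNReal.ofReal t

/-- The range `{x_s, 0 ≤ s < ξ(x)}` of the path, as a subset of `S`. -/
def pathRange (x : Path S) : Set S := {a : S | ∃ s : ℝ, 0 ≤ s ∧ x s = (a : OnePoint S)}

/-- `x` is an exploding cadlag path: `x_t = Δ` exactly for `t ≥ ξ(x)` (and we normalize
`x` on negative times), `x` is right-continuous before explosion, and has left limits in `S`
at every point of `(0, ξ(x))`. -/
def IsDexp (x : Path S) : Prop :=
  (∀ t ≤ (0:ℝ), x t = x 0) ∧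
  (∀ ⦃s t : ℝ⦄, s ≤ t → x s = OnePoint.infty → x t = OnePoint.infty) ∧
  IsClosed (xiSet x) ∧
  (∀ t : ℝ, 0 ≤ t → x t ≠ OnePoint.infty → Tendsto x (𝓝[>] t) (𝓝 (x t))) ∧
  (∀ t : ℝ, 0 < t → x t ≠ OnePoint.infty →
    ∃ a : S, Tendsto x (𝓝[<] t) (𝓝 (a : OnePoint S)))

/-- `x` belongs to the local cadlag space `𝔻_loc(S)`. -/
def IsDloc (x : Path S) : Prop :=
  IsDexp x ∧
  ((explodes x ∧ 0 < xiR x ∧ IsCompact (closure (pathRange x))) →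
    ∃ a : S, Tendsto x (𝓝[<] xiR x) (𝓝 (a : OnePoint S)))

/-- `x` belongs to the global cadlag space `𝔻(S)`, i.e. `ξ(x) = ∞`. -/
def IsDglob (x : Path S) : Prop := IsDexp x ∧ ∀ t : ℝ, x t ≠ OnePoint.infty

/-- `x` is a cadlag path with values in the compact space `S^Δ`, i.e. `x ∈ 𝔻(S^Δ)`. -/
def IsCadlagDelta (x : Path S) : Prop :=
  (∀ t ≤ (0:ℝ), x t = x 0) ∧
  (∀ t : ℝ, 0 ≤ t → Tendsto x (𝓝[>] t) (𝓝 (x t))) ∧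
  (∀ t : ℝ, 0 < t → ∃ a : OnePoint S, Tendsto x (𝓝[<] t) (𝓝 a))

/-- The space `𝔻_exp(S)` of exploding cadlag paths. -/
def DexpT (S : Type*) [TopologicalSpace S] : Type _ := {x : Path S // IsDexp x}

/-- The space `𝔻_loc(S)`. -/
def DlocT (S : Type*) [TopologicalSpace S] : Type _ := {x : Path S // IsDloc x}

/-- The space `𝔻(S)`. -/
def DglobT (S : Type*) [TopologicalSpace S] : Type _ := {x : Path S // IsDglob x}

/-- The space `𝔻(S^Δ)`. -/
def DDeltaT (S : Type*) [TopologicalSpace S] : Type _ := {x : Path S // IsCadlagDelta x}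

/-! ### Time changes `Λ̃` and `Λ` -/

/-- `l` is an increasing bijection of `ℝ₊` (extended by the identity on negative reals):
the class `Λ̃`. -/
def IsTimeBij (l : ℝ → ℝ) : Prop :=
  StrictMono l ∧ Function.Surjective l ∧ ∀ t ≤ (0:ℝ), l t = t

/-- `‖log λ̇‖_t ≤ ε`, expressed through slopes. -/
def LogSlopeLe (l : ℝ → ℝ) (t ε : ℝ) : Prop :=
  ∀ s₁ s₂ : ℝ, 0 ≤ s₁ → s₁ < s₂ → s₂ ≤ t → |Real.log ((l s₂ - l s₁) / (s₂ - s₁))| ≤ ε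

/-- `‖λ - id‖_t ≤ ε`. -/
def IdDistLe (l : ℝ → ℝ) (t ε : ℝ) : Prop := ∀ s : ℝ, 0 ≤ s → s ≤ t → |l s - s| ≤ ε

/-- `l` belongs to the class `Λ` of increasing bijections of `ℝ₊` which are locally
Lipschitz together with their inverses (equivalently, `‖log λ̇‖_t < ∞` for all `t`). -/
def IsLipTimeBij (l : ℝ → ℝ) : Prop :=
  IsTimeBij l ∧ ∀ t : ℝ, 0 < t → ∃ C : ℝ, LogSlopeLe l t C

/-- `ξ(x) < ∞` together with the relative compactness in `S` of `{x_s, s < ξ(x)}`. -/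
def Case1 (x : Path S) : Prop := explodes x ∧ IsCompact (closure (pathRange x))

/-- Convergence criterion of Theorem 2.6, parametrized by the class of time changes and
by the norm used on them. -/
def ConvGen (ρ : S → S → ℝ) (Lam : (ℝ → ℝ) → Prop) (Nrm : (ℝ → ℝ) → ℝ → ℝ → Prop)
    (xk : ℕ → Path S) (x : Path S) : Prop :=
  ∃ l : ℕ → ℝ → ℝ, (∀ k, Lam (l k)) ∧
    (Case1 x →
      ((∀ᶠ k in atTop, ∀ s : ℝ, 0 ≤ s → s < l k (xiR x) → xk k s ≠ OnePoint.infty) ∧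
      (∀ ε > (0:ℝ), ∀ᶠ k in atTop, ∀ s : ℝ, 0 ≤ s → s < xiR x →
        dd ρ (x s) (xk k (l k s)) ≤ ε) ∧
      Tendsto (fun k => xk k (l k (xiR x))) atTop (𝓝 (OnePoint.infty : OnePoint S)) ∧
      (∀ ε > (0:ℝ), ∀ᶠ k in atTop, Nrm (l k) (xiR x) ε))) ∧
    (¬ Case1 x →
      ∀ t : ℝ, 0 ≤ t → x t ≠ OnePoint.infty →
        ((∀ᶠ k in atTop, xk k (l k t) ≠ OnePoint.infty) ∧
        (∀ ε > (0:ℝ), ∀ᶠ k in atTop, ∀ s : ℝ, 0 ≤ s → s ≤ t →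
          dd ρ (x s) (xk k (l k s)) ≤ ε) ∧
        (∀ ε > (0:ℝ), ∀ᶠ k in atTop, Nrm (l k) t ε)))

/-- Convergence criterion of Theorem 2.6 (with `Λ` and `‖log λ̇‖`). -/
def ConvLoc (ρ : S → S → ℝ) (xk : ℕ → Path S) (x : Path S) : Prop :=
  ConvGen ρ IsLipTimeBij LogSlopeLe xk x

/-- Convergence criterion of Theorem 2.7 (with `Λ̃` and `‖λ - id‖`). -/
def ConvLocTilde (ρ : S → S → ℝ) (xk : ℕ → Path S) (x : Path S) : Prop :=
  ConvGen ρ IsTimeBij IdDistLe xk x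

/-! ### σ-algebras -/

/-- The Borel σ-algebra of `S^Δ`. -/
def msOP (S : Type*) [TopologicalSpace S] : MeasurableSpace (OnePoint S) := borel _

/-- The σ-algebra `𝓕_t = σ(X_s, 0 ≤ s ≤ t)`. -/
def filt {α : Type*} (ev : α → Path S) (t : ℝ) : MeasurableSpace α :=
  ⨆ s ∈ Icc (0:ℝ) t, MeasurableSpace.comap (fun x => ev x s) (msOP S)

/-- The σ-algebra `𝓕_{t-} = σ(X_s, 0 ≤ s < t)`. -/
def filtLt {α : Type*} (ev : α → Path S) (t : ℝ) : MeasurableSpace α :=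
  ⨆ s ∈ Ico (0:ℝ) t, MeasurableSpace.comap (fun x => ev x s) (msOP S)

/-- The σ-algebra `𝓕 = σ(X_s, 0 ≤ s < ∞)`. -/
def filtAll {α : Type*} (ev : α → Path S) : MeasurableSpace α :=
  ⨆ s ∈ Ici (0:ℝ), MeasurableSpace.comap (fun x => ev x s) (msOP S)

/-- The σ-algebra `𝓕_{t+} = ⋂_{s>t} 𝓕_s`. -/
def filtPlus {α : Type*} (ev : α → Path S) (t : ℝ) : MeasurableSpace α :=
  ⨅ s ∈ Ioi t, filt ev s

/-- `τ` is an `(𝓕_t)`-stopping time. -/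
def IsStopping {α : Type*} (ev : α → Path S) (τ : α → ℝ≥0∞) : Prop :=
  ∀ t : ℝ, 0 ≤ t → MeasurableSet[filt ev t] {x | τ x ≤ ENNReal.ofReal t}

open Classical in
/-- Evaluation of a path at a `[0,∞]`-valued time (`Δ` at time `∞`). -/
def evalE (x : Path S) (t : ℝ≥0∞) : OnePoint S :=
  if t = ⊤ then OnePoint.infty else x t.toReal

open Classical in
/-- The left limit `x_{t-}`, junk value `Δ` if it does not exist. -/
def leftLimVal (x : Path S) (t : ℝ) : OnePoint S :=
  if h : ∃ a : OnePoint S, Tendsto x (𝓝[<] t) (𝓝 a) then h.choose else OnePoint.infty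

/-- The exit time `τ^U = inf {t ≥ 0 | X_{t-} ∉ U or X_t ∉ U}`. -/
def tauU (U : Set S) (x : Path S) : ℝ≥0∞ :=
  ⨅ t ∈ {t : ℝ | 0 ≤ t ∧
      ((0 < t ∧ ¬ ∃ a ∈ U, Tendsto x (𝓝[<] t) (𝓝 (a : OnePoint S))) ∨
        ¬ ∃ a ∈ U, x t = (a : OnePoint S))},
    ENNReal.ofReal t

/-! ### The modulus `ω'` -/

/-- The modulus of continuity `ω'_{t,K,x}(δ)` of (2.5), with values in `[0,∞]`. -/
def omegaMod (ρ : S → S → ℝ) (t : ℝ) (K : Set S) (x : Path S) (δ : ℝ) : ℝ≥0∞ :=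
  ⨅ (p : ℕ × (ℕ → ℝ)) (_ : p.2 0 = 0 ∧ (∀ i < p.1, p.2 i + δ < p.2 (i + 1)) ∧
      (∀ s : ℝ, 0 ≤ s → s < p.2 p.1 → x s ≠ OnePoint.infty) ∧
      ¬ (p.2 p.1 ≤ t ∧ ∃ a ∈ K, x (p.2 p.1) = (a : OnePoint S))),
    ⨆ (i : ℕ) (_ : i < p.1) (s₁ : ℝ) (_ : p.2 i ≤ s₁ ∧ s₁ < p.2 (i + 1))
      (s₂ : ℝ) (_ : p.2 i ≤ s₂ ∧ s₂ < p.2 (i + 1)),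
      ENNReal.ofReal (dd ρ (x s₁) (x s₂))

/-! ### Skorokhod pseudo-metrics -/

open Classical in
/-- The penalty term `d(x_{t₁}, K^c) ∧ (t - t₁)_+ 𝟙_{t₁ < ξ(x)}` appearing in the
definition of the pseudo-metrics (with the convention `d(a, ∅) = +∞`). -/
noncomputable def pen (ρ : S → S → ℝ) (t : ℝ) (K : Set S) (x : Path S) (t₁ : ℝ) : ℝ :=
  Option.elim (show Option S from x t₁) 0 (fun a =>
    if (Kᶜ : Set S).Nonempty then min (sInf ((fun b => ρ a b) '' (Kᶜ : Set S))) (max (t - t₁) 0)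
    else max (t - t₁) 0)

open Classical in
/-- The set of admissible bounds in the definition of `ρ̃_{t,K}` (`useLip = false`) and of
`ρ_{t,K}` (`useLip = true`). -/
def rhoSet (useLip : Bool) (ρ : S → S → ℝ) (t : ℝ) (K : Set S) (x y : Path S) : Set ℝ :=
  {r : ℝ | 0 ≤ r ∧ ∃ t₁ t₂ : ℝ, ∃ l : ℝ → ℝ, 0 ≤ t₁ ∧ 0 ≤ t₂ ∧ l t₁ = t₂ ∧
    (if useLip then IsLipTimeBij l else IsTimeBij l) ∧
    (∀ s : ℝ, 0 ≤ s → s < t₁ → x s ≠ OnePoint.infty) ∧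
    (∀ s : ℝ, 0 ≤ s → s < t₂ → y s ≠ OnePoint.infty) ∧
    (∀ s : ℝ, 0 ≤ s → s < t₁ → dd ρ (x s) (y (l s)) ≤ r) ∧
    IdDistLe l t₁ r ∧
    (useLip = true → LogSlopeLe l t₁ r) ∧
    pen ρ t K x t₁ ≤ r ∧ pen ρ t K y t₂ ≤ r}

/-- The pseudo-metric `ρ̃_{t,K}`. -/
noncomputable def rhoTilde (ρ : S → S → ℝ) (t : ℝ) (K : Set S) (x y : Path S) : ℝ :=
  sInf (rhoSet false ρ t K x y)

/-- The pseudo-metric `ρ_{t,K}`. -/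
noncomputable def rhoMet (ρ : S → S → ℝ) (t : ℝ) (K : Set S) (x y : Path S) : ℝ :=
  sInf (rhoSet true ρ t K x y)

/-! ### Time change -/

/-- `g ∈ C^{≠0}(S, ℝ₊)`: `{g = 0}` is closed and `g` is continuous on `{g ≠ 0}`. -/
def Czero (g : S → ℝ) : Prop :=
  (∀ a : S, 0 ≤ g a) ∧ IsClosed {a : S | g a = 0} ∧ ContinuousOn g {a : S | g a ≠ 0}

/-- `g ∈ C̃^{≠0}(S, ℝ₊)`: moreover `g` is bounded on every compact subset of `S`. -/
def CzeroLocBdd (g : S → ℝ) : Prop :=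
  Czero g ∧ ∀ K : Set S, IsCompact K → ∃ C : ℝ, ∀ a ∈ K, g a ≤ C

/-- `g` extended to `S^Δ` by the junk value `0` at `Δ`. -/
def gOP (g : S → ℝ) : OnePoint S → ℝ := fun a => Option.elim (show Option S from a) 0 g

open Classical in
/-- The additive functional `A^g_t(x) = ∫_0^t du / g(x_u)` for `t ∈ [0, τ^{{g≠0}}(x)]`,
and `+∞` otherwise. -/
noncomputable def Ag (g : S → ℝ) (x : Path S) (t : ℝ) : ℝ≥0∞ :=
  if 0 ≤ t ∧ ENNReal.ofReal t ≤ tauU {a : S | g a ≠ 0} x then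
    ∫⁻ u in Ioo (0:ℝ) t, (ENNReal.ofReal (gOP g (x u)))⁻¹
  else ⊤

/-- The time change `τ^g_t(x) = inf {s ≥ 0 | A^g_s(x) ≥ t}`, for `t ∈ [0,∞]`. -/
noncomputable def taug (g : S → ℝ) (x : Path S) (t : ℝ≥0∞) : ℝ≥0∞ :=
  ⨅ s ∈ {s : ℝ | 0 ≤ s ∧ t ≤ Ag g x s}, ENNReal.ofReal s

/-- The total mass `A^g_{τ^g_∞(x)}(x) = ∫_0^{τ^{{g≠0}}(x)} du / g(x_u)`. -/
noncomputable def Atotal (g : S → ℝ) (x : Path S) : ℝ≥0∞ :=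
  ∫⁻ u in {u : ℝ | 0 < u ∧ ENNReal.ofReal u ≤ tauU {a : S | g a ≠ 0} x},
    (ENNReal.ofReal (gOP g (x u)))⁻¹

/-- The filter of times converging to `t ∈ [0,∞]` from the left. -/
noncomputable def leftFilter (t : ℝ≥0∞) : Filter ℝ := if t = ⊤ then atTop else 𝓝[<] t.toReal

open Classical in
/-- The left limit `x_{t-}` at a `[0,∞]`-valued time, junk value `Δ` if it does not exist. -/
noncomputable def leftLimValE (x : Path S) (t : ℝ≥0∞) : OnePoint S :=
  if h : ∃ a : OnePoint S, Tendsto x (leftFilter t) (𝓝 a) then h.choose else OnePoint.infty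

open Classical in
/-- The time-changed path `g·x` of Definition 3.1.  -/
noncomputable def timeChange (g : S → ℝ) (x : Path S) : Path S := fun t =>
  if 0 ≤ t ∧ Atotal g x ≤ ENNReal.ofReal t ∧
      ∃ a : S, g a = 0 ∧ Tendsto x (leftFilter (tauU {b : S | g b ≠ 0} x)) (𝓝 (a : OnePoint S))
  then leftLimValE x (tauU {b : S | g b ≠ 0} x)
  else evalE x (taug g x (ENNReal.ofReal t))

/-- The constant path equal to `Δ`. -/
def deadPath (S : Type*) [TopologicalSpace S] : Path S := fun _ => OnePoint.infty

lemma isDexp_deadPath : IsDexp (deadPath S) := by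
  refine ⟨fun _ _ => rfl, fun _ _ _ _ => rfl, ?_, ?_, ?_⟩
  · have : xiSet (deadPath S) = univ := by ext t; simp [xiSet, deadPath]
    rw [this]; exact isClosed_univ
  · intro t _ h; exact absurd rfl h
  · intro t _ h; exact absurd rfl h

lemma isDloc_deadPath : IsDloc (deadPath S) := by
  refine ⟨isDexp_deadPath, ?_⟩
  rintro ⟨-, hxi, -⟩
  exfalso
  have huniv : xiSet (deadPath S) = univ := by ext t; simp [xiSet, deadPath]
  have : xiR (deadPath S) = 0 := by
    rw [xiR, huniv]
    exact Real.sInf_of_not_bddBelow (by simp [not_bddBelow_univ (α := ℝ)])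
  rw [this] at hxi; exact lt_irrefl 0 hxi

lemma isCadlagDelta_deadPath : IsCadlagDelta (deadPath S) :=
  ⟨fun _ _ => rfl, fun _ _ => tendsto_const_nhds, fun _ _ => ⟨OnePoint.infty, tendsto_const_nhds⟩⟩

open Classical in
/-- Packaging of a raw path as an element of `𝔻_loc(S)` (junk value if it is not one). -/
noncomputable def toDloc (y : Path S) : DlocT S :=
  if h : IsDloc y then ⟨y, h⟩ else ⟨deadPath S, isDloc_deadPath⟩

open Classical in
/-- Packaging of a raw path as an element of `𝔻(S^Δ)` (junk value if it is not one). -/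
noncomputable def toDDelta (y : Path S) : DDeltaT S :=
  if h : IsCadlagDelta y then ⟨y, h⟩ else ⟨deadPath S, isCadlagDelta_deadPath⟩

/-- Condition defining the continuity set `B` of Theorem 3.3, for a pair `(g, x)`. -/
def BCond (g : S → ℝ) (x : Path S) : Prop :=
  (tauU {a : S | g a ≠ 0} x < xiE x →
    ∀ t : ℝ, tauU {a : S | g a ≠ 0} x < ENNReal.ofReal t →
      ∫⁻ u in Ioo (0:ℝ) t, (ENNReal.ofReal (gOP g (x u)))⁻¹ = ⊤) ∧
  (Atotal g x < ⊤ →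
    ∀ a : S, tauU {a : S | g a ≠ 0} x ≠ ⊤ →
      Tendsto x (𝓝[<] (tauU {a : S | g a ≠ 0} x).toReal) (𝓝 (a : OnePoint S)) →
      g a = 0 → x ((tauU {a : S | g a ≠ 0} x).toReal) = (a : OnePoint S))

/-- `x_{ξ(x)-}` exists in `U` whenever `0 < ξ(x) < ∞`. -/
def limExistsIn (U : Set S) (y : Path S) : Prop :=
  (explodes y ∧ 0 < xiR y) → ∃ a ∈ U, Tendsto y (𝓝[<] xiR y) (𝓝 (a : OnePoint S))

/-! ### Global Skorokhod convergence -/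

/-- Convergence in the global Skorokhod topology of `𝔻(S)` (Corollary 2.7). -/
def ConvGlob (ρ : S → S → ℝ) (xk : ℕ → Path S) (x : Path S) : Prop :=
  ∃ l : ℕ → ℝ → ℝ, (∀ k, IsLipTimeBij (l k)) ∧ ∀ t : ℝ, 0 ≤ t →
    (∀ ε > (0:ℝ), ∀ᶠ k in atTop, ∀ s : ℝ, 0 ≤ s → s ≤ t → dd ρ (x s) (xk k (l k s)) ≤ ε) ∧
    (∀ ε > (0:ℝ), ∀ᶠ k in atTop, LogSlopeLe (l k) t ε)

/-- Convergence in the global Skorokhod topology of `𝔻(S^Δ)`, written with entourages of the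
(unique) uniformity of the compact space `S^Δ` (equivalently, with any compatible metric). -/
def ConvGlobDelta (xk : ℕ → Path S) (x : Path S) : Prop :=
  ∃ l : ℕ → ℝ → ℝ, (∀ k, IsTimeBij (l k)) ∧ ∀ t : ℝ, 0 ≤ t →
    (∀ V ∈ 𝓝ˢ (Set.diagonal (OnePoint S)), ∀ᶠ k in atTop,
      ∀ s : ℝ, 0 ≤ s → s ≤ t → ((x s, xk k (l k s)) : OnePoint S × OnePoint S) ∈ V) ∧
    (∀ ε > (0:ℝ), ∀ᶠ k in atTop, IdDistLe (l k) t ε)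

/-! ### Markov families -/

/-- The shifted path `(X_{t₀+t})_{t≥0}`, at a `[0,∞]`-valued time `t₀`. -/
noncomputable def shiftE (x : Path S) (t₀ : ℝ≥0∞) : Path S := fun t =>
  if t₀ = ⊤ then OnePoint.infty else x (t₀.toReal + max t 0)

/-- Conditions a), b) in the definition of a Markov family (together with the
normalisation `P_Δ(ξ = 0) = 1`). -/
def MarkovBase {α : Type*} (ev : α → Path S)
    (P : OnePoint S → @Measure α (filtAll ev)) : Prop :=
  (∀ a : OnePoint S, @IsProbabilityMeasure α (filtAll ev) (P a)) ∧
  (∀ B : Set α, MeasurableSet[filtAll ev] B →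
    @Measurable S ℝ≥0∞ (borel S) inferInstance (fun a : S => P (a : OnePoint S) B)) ∧
  (∀ a : S, P (a : OnePoint S) {x | ev x 0 = (a : OnePoint S)} = 1) ∧
  (P OnePoint.infty {x | ev x 0 = OnePoint.infty} = 1)

/-- Condition c) in the definition of a `(𝓖_t)`-Markov family. -/
def MarkovProp {α : Type*} (ev : α → Path S) (G : ℝ → MeasurableSpace α)
    (P : OnePoint S → @Measure α (filtAll ev)) : Prop :=
  ∀ (a : OnePoint S) (t₀ : ℝ), 0 ≤ t₀ →
    ∀ B : Set (Path S), MeasurableSet[filtAll (id : Path S → Path S)] B →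
      ∀ A : Set α, MeasurableSet[G t₀] A →
        P a (A ∩ {x | (fun t => ev x (t₀ + max t 0)) ∈ B}) =
          ∫⁻ x in A, P (ev x t₀) {y | ev y ∈ B} ∂(P a)

/-- Condition c) for a `(𝓖_t)`-strong Markov family: the Markov property at every
`(𝓖_t)`-stopping time. -/
def StrongMarkovProp {α : Type*} (ev : α → Path S) (G : ℝ → MeasurableSpace α)
    (P : OnePoint S → @Measure α (filtAll ev)) : Prop :=
  ∀ (a : OnePoint S) (τ : α → ℝ≥0∞),
    (∀ t : ℝ, 0 ≤ t → MeasurableSet[G t] {x | τ x ≤ ENNReal.ofReal t}) →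
    ∀ B : Set (Path S), MeasurableSet[filtAll (id : Path S → Path S)] B →
      ∀ A : Set α, MeasurableSet[filtAll ev] A →
        (∀ t : ℝ, 0 ≤ t → MeasurableSet[G t] (A ∩ {x | τ x ≤ ENNReal.ofReal t})) →
        P a (A ∩ {x | shiftE (ev x) (τ x) ∈ B}) =
          ∫⁻ x in A, P (evalE (ev x) (τ x)) {y | ev y ∈ B} ∂(P a)

/-! `ω'_{t,K,x}(δ)` is an infimum, over admissible partitions, of the largest oscillation of `x`
on the intervals of the partition, so it suffices to transport a nearly optimal partition for `x`
to every `x_k` close to `x`: compose it with the time changes `λ_k` of the convergence criterion.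
The gaps stay above `δ` because the slopes of `λ_k` tend to `1` and there are finitely many gaps;
the oscillation grows by at most twice the uniform distance between `x` and `x_k ∘ λ_k`. The
endpoint condition survives: beyond `t` by the same slope control, outside the closed set `K` by
uniform closeness, and at an explosion time `ξ(x)` because `x_k(λ_k ξ(x)) → Δ`. If instead `x`
explodes at the endpoint with a range that is not relatively compact, then `x` leaves `K` shortly
before `ξ(x)` (a càdlàg path has relatively compact range on compact time intervals), and cutting
the last interval there reduces to the previous cases. Polish spaces are sequential, so sequences
suffice. -/

local notation "Δ" => OnePoint.infty

section Partition

variable {X : Type*}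

def IsAdmissible (z : Path X) (t : ℝ) (K : Set X) (δ : ℝ) (N : ℕ) (u : ℕ → ℝ) : Prop :=
  u 0 = 0 ∧ (∀ i < N, u i + δ < u (i + 1)) ∧ (∀ s : ℝ, 0 ≤ s → s < u N → z s ≠ Δ) ∧
    ¬ (u N ≤ t ∧ ∃ a ∈ K, z (u N) = (a : OnePoint X))

def oscillation (ρ : X → X → ℝ) (z : Path X) (N : ℕ) (u : ℕ → ℝ) : ℝ≥0∞ :=
  ⨆ (i : ℕ) (_ : i < N) (s₁ : ℝ) (_ : s₁ ∈ Ico (u i) (u (i + 1)))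
    (s₂ : ℝ) (_ : s₂ ∈ Ico (u i) (u (i + 1))), ENNReal.ofReal (dd ρ (z s₁) (z s₂))

variable {ρ : X → X → ℝ} {z : Path X} {t δ : ℝ} {K : Set X} {N : ℕ} {u v : ℕ → ℝ}

theorem omegaMod_eq_iInf_oscillation :
    omegaMod ρ t K z δ =
      ⨅ (p : ℕ × (ℕ → ℝ)) (_ : IsAdmissible z t K δ p.1 p.2), oscillation ρ z p.1 p.2 :=
  rfl

theorem omegaMod_le_oscillation (h : IsAdmissible z t K δ N u) :
    omegaMod ρ t K z δ ≤ oscillation ρ z N u :=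
  iInf₂_le (N, u) h

theorem exists_isAdmissible_of_omegaMod_lt {y : ℝ≥0∞} (h : omegaMod ρ t K z δ < y) :
    ∃ N u, IsAdmissible z t K δ N u ∧ oscillation ρ z N u < y := by
  rw [omegaMod_eq_iInf_oscillation] at h
  obtain ⟨⟨N, u⟩, hp⟩ := iInf_lt_iff.1 h
  obtain ⟨hadm, hlt⟩ := iInf_lt_iff.1 hp
  exact ⟨N, u, hadm, hlt⟩

theorem ofReal_dd_le_oscillation {i : ℕ} (hi : i < N) {s₁ s₂ : ℝ}
    (h₁ : s₁ ∈ Ico (u i) (u (i + 1))) (h₂ : s₂ ∈ Ico (u i) (u (i + 1))) :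
    ENNReal.ofReal (dd ρ (z s₁) (z s₂)) ≤ oscillation ρ z N u :=
  le_iSup₂_of_le i hi <| le_iSup₂_of_le s₁ h₁ <| le_iSup₂_of_le s₂ h₂ le_rfl

theorem oscillation_le {c : ℝ≥0∞}
    (h : ∀ i < N, ∀ s₁ ∈ Ico (u i) (u (i + 1)), ∀ s₂ ∈ Ico (u i) (u (i + 1)),
      ENNReal.ofReal (dd ρ (z s₁) (z s₂)) ≤ c) :
    oscillation ρ z N u ≤ c :=
  iSup₂_le fun i hi => iSup₂_le fun s₁ h₁ => iSup₂_le fun s₂ h₂ => h i hi s₁ h₁ s₂ h₂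

theorem oscillation_mono (h : ∀ i < N, Ico (v i) (v (i + 1)) ⊆ Ico (u i) (u (i + 1))) :
    oscillation ρ z N v ≤ oscillation ρ z N u :=
  oscillation_le fun i hi _ h₁ _ h₂ => ofReal_dd_le_oscillation hi (h i hi h₁) (h i hi h₂)

theorem oscillation_update_last_le {M : ℕ} {s : ℝ} (hs : s ≤ u (M + 1)) :
    oscillation ρ z (M + 1) (Function.update u (M + 1) s) ≤ oscillation ρ z (M + 1) u := by
  refine oscillation_mono fun i hi => ?_
  rw [Function.update_of_ne (by omega)]
  refine Ico_subset_Ico_right ?_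
  rcases eq_or_ne (i + 1) (M + 1) with h | h
  · rw [h, Function.update_self]
    exact hs
  · rw [Function.update_of_ne h]

theorem IsAdmissible.update_last {M : ℕ} (hu : IsAdmissible z t K δ (M + 1) u) {s : ℝ}
    (hMs : u M + δ < s) (hs : s ≤ u (M + 1)) (hend : ¬ (s ≤ t ∧ ∃ a ∈ K, z s = a)) :
    IsAdmissible z t K δ (M + 1) (Function.update u (M + 1) s) := by
  obtain ⟨hu0, hgap, hz, -⟩ := hu
  simp only [IsAdmissible, Function.update_self]
  refine ⟨by rwa [Function.update_of_ne (by omega)], fun i hi => ?_,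
    fun r hr hrs => hz r hr (hrs.trans_le hs), hend⟩
  rw [Function.update_of_ne (by omega)]
  rcases eq_or_ne (i + 1) (M + 1) with h | h
  · rw [h, Function.update_self]
    obtain rfl : i = M := by omega
    exact hMs
  · rw [Function.update_of_ne h]
    exact hgap i hi

end Partition

theorem monotoneOn_Iic_of_lt_succ {u : ℕ → ℝ} {N : ℕ} (h : ∀ i < N, u i < u (i + 1)) :
    MonotoneOn u (Iic N) :=
  (strictMonoOn_Iic_of_lt_succ fun i hi => by simpa using h i hi).monotoneOn

theorem nonneg_of_lt_succ {u : ℕ → ℝ} {N : ℕ} (hu0 : u 0 = 0)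
    (h : ∀ i < N, u i < u (i + 1)) {i : ℕ} (hi : i ≤ N) : 0 ≤ u i :=
  hu0 ▸ monotoneOn_Iic_of_lt_succ h (Nat.zero_le N) hi (Nat.zero_le i)

theorem lt_succ_of_add_lt {u : ℕ → ℝ} {N : ℕ} {δ : ℝ} (hδ : 0 ≤ δ)
    (h : ∀ i < N, u i + δ < u (i + 1)) : ∀ i < N, u i < u (i + 1) :=
  fun i hi => (le_add_of_nonneg_right hδ).trans_lt (h i hi)

section Paths

variable {X : Type*} [TopologicalSpace X] {x : Path X}

theorem IsDexp.infty_of_le (hx : IsDexp x) {s r : ℝ} (hsr : s ≤ r) (hs : x s = Δ) : x r = Δ :=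
  hx.2.1 hsr hs

theorem IsDexp.lt_xiR (hx : IsDexp x) (hex : explodes x) {r : ℝ} (hr : x r ≠ Δ) :
    r < xiR x := by
  have hsub : xiSet x ⊆ Ioi r := fun s hs => lt_of_not_ge fun hsr => hr (hx.infty_of_le hsr hs)
  exact hsub (hx.2.2.1.csInf_mem hex ⟨r, fun s hs => (hsub hs).le⟩)

theorem IsDexp.xiR_eq (hx : IsDexp x) {r : ℝ} (hr : 0 ≤ r)
    (hne : ∀ s : ℝ, 0 ≤ s → s < r → x s ≠ Δ) (h : x r = Δ) : xiR x = r := by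
  rcases hr.eq_or_lt with rfl | hr
  · -- `x ≡ Δ`, so `xiSet x = univ`, whose `sInf` is the junk value `0`
    have huniv : xiSet x = univ := eq_univ_of_forall fun s => by
      rcases le_total s 0 with hs | hs
      · exact (hx.1 s hs).trans h
      · exact hx.infty_of_le hs h
    rw [xiR, huniv, Real.sInf_univ]
  · refine IsLeast.csInf_eq ⟨h, fun s hs => le_of_not_gt fun hsr => ?_⟩
    rcases le_total 0 s with h0 | h0
    · exact hne s h0 hsr hs
    · exact hne 0 le_rfl hr (hx.infty_of_le h0 hs)

theorem IsDexp.case1_of_apply_zero (hx : IsDexp x) (h : x 0 = Δ) : Case1 x := by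
  have hempty : pathRange x = ∅ :=
    eq_empty_of_forall_notMem fun a ⟨s, hs, hxs⟩ =>
      OnePoint.coe_ne_infty a (hxs ▸ hx.infty_of_le hs h)
  exact ⟨⟨0, h⟩, by simp [hempty]⟩

variable [WeaklyLocallyCompactSpace X]

theorem IsDexp.exists_isCompact_eventually_mem (hx : IsDexp x) {r : ℝ} (hr : 0 ≤ r)
    (hxr : x r ≠ Δ) :
    ∃ C : Set X, IsCompact C ∧ ∀ᶠ s in 𝓝 r, 0 ≤ s → x s ∈ ((↑) : X → OnePoint X) '' C := by
  obtain ⟨-, -, -, hright, hleft⟩ := hx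
  have himage {c : X} {C : Set X} (hC : C ∈ 𝓝 c) :
      ((↑) : X → OnePoint X) '' C ∈ 𝓝 (c : OnePoint X) :=
    OnePoint.isOpenEmbedding_coe.isOpenMap.image_mem_nhds hC
  obtain ⟨c, hc⟩ := OnePoint.ne_infty_iff_exists.1 hxr
  obtain ⟨Cr, hCr, hCr_nhds⟩ := exists_compact_mem_nhds c
  have hGE : ∀ᶠ s in 𝓝[≥] r, x s ∈ ((↑) : X → OnePoint X) '' Cr := by
    have := continuousWithinAt_Ioi_iff_Ici.1 (hright r hr hxr)
    rw [ContinuousWithinAt, ← hc] at this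
    exact this.eventually_mem (himage hCr_nhds)
  obtain ⟨Cl, hCl, hLT⟩ : ∃ Cl : Set X, IsCompact Cl ∧
      ∀ᶠ s in 𝓝[<] r, 0 ≤ s → x s ∈ ((↑) : X → OnePoint X) '' Cl := by
    rcases hr.eq_or_lt with rfl | hr
    · exact ⟨∅, isCompact_empty,
        eventually_nhdsWithin_of_forall fun s hs h => absurd h (not_le.2 hs)⟩
    · obtain ⟨a, ha⟩ := hleft r hr hxr
      obtain ⟨Cl, hCl, hCl_nhds⟩ := exists_compact_mem_nhds a
      exact ⟨Cl, hCl, (ha.eventually_mem (himage hCl_nhds)).mono fun s hs _ => hs⟩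
  refine ⟨Cl ∪ Cr, hCl.union hCr, ?_⟩
  rw [← nhdsLT_sup_nhdsGE, eventually_sup]
  exact ⟨hLT.mono fun s hs h => image_mono subset_union_left (hs h),
    hGE.mono fun s hs _ => image_mono subset_union_right hs⟩

theorem IsDexp.exists_isCompact_image_Icc (hx : IsDexp x) {b : ℝ}
    (h : ∀ s ∈ Icc 0 b, x s ≠ Δ) :
    ∃ C : Set X, IsCompact C ∧ ∀ s ∈ Icc 0 b, x s ∈ ((↑) : X → OnePoint X) '' C := by
  choose C hC hev using fun r (hr : r ∈ Icc (0 : ℝ) b) =>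
    hx.exists_isCompact_eventually_mem hr.1 (h r hr)
  obtain ⟨F, hcover⟩ := isCompact_Icc.elim_nhds_subcover' _ hev
  refine ⟨⋃ r ∈ F, C r.1 r.2, F.isCompact_biUnion fun r _ => hC _ _, fun s hs => ?_⟩
  obtain ⟨r, hrF, hsr⟩ := mem_iUnion₂.1 (hcover hs)
  exact image_mono (subset_biUnion_of_mem (u := fun r : Icc (0 : ℝ) b => C r.1 r.2) hrF)
    (hsr hs.1)

theorem IsDexp.exists_notMem_of_not_isCompact [T2Space X] (hx : IsDexp x)
    (hnc : ¬ IsCompact (closure (pathRange x))) {K : Set X} (hK : IsCompact K) {lo r : ℝ}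
    (hlor : lo < r) (hne : ∀ s : ℝ, 0 ≤ s → s < r → x s ≠ Δ) (hr : x r = Δ) :
    ∃ s ∈ Ioo lo r, ¬ ∃ a ∈ K, x s = (a : OnePoint X) := by
  by_contra! hK'
  obtain ⟨C, hC, hCx⟩ := hx.exists_isCompact_image_Icc fun s hs => hne s hs.1 (hs.2.trans_lt hlor)
  refine hnc ((hC.union hK).of_isClosed_subset isClosed_closure
    (closure_minimal ?_ (hC.union hK).isClosed))
  rintro a ⟨s, hs, hxs⟩
  rcases le_or_gt s lo with hslo | hlos
  · obtain ⟨c, hc, hcx⟩ := hCx s ⟨hs, hslo⟩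
    exact Or.inl (OnePoint.coe_injective (hcx.trans hxs) ▸ hc)
  rcases lt_or_ge s r with hsr | hrs
  · obtain ⟨c, hc, hcx⟩ := hK' s ⟨hlos, hsr⟩
    exact Or.inr (OnePoint.coe_injective (hcx.symm.trans hxs) ▸ hc)
  · exact absurd (hxs ▸ hx.infty_of_le hrs hr) (OnePoint.coe_ne_infty a)

end Paths

section Metric

variable {X : Type*} [PseudoMetricSpace X]

theorem dd_dist_nonneg (a b : OnePoint X) : 0 ≤ dd dist a b := by
  induction a using OnePoint.rec <;> induction b using OnePoint.rec <;>
    first | exact le_rfl | exact dist_nonneg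

theorem dd_dist_comm (a b : OnePoint X) : dd dist a b = dd dist b a := by
  induction a using OnePoint.rec <;> induction b using OnePoint.rec <;>
    first | rfl | exact dist_comm _ _

theorem dd_dist_triangle {b : OnePoint X} (hb : b ≠ Δ) (a c : OnePoint X) :
    dd dist a c ≤ dd dist a b + dd dist b c := by
  obtain ⟨b, rfl⟩ := OnePoint.ne_infty_iff_exists.1 hb
  induction a using OnePoint.rec
  · exact add_nonneg le_rfl (dd_dist_nonneg _ _)
  induction c using OnePoint.rec
  · exact add_nonneg (dd_dist_nonneg _ _) le_rfl
  exact dist_triangle _ _ _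

theorem eventually_not_exists_mem_of_dd_le {ι : Type*} {L : Filter ι} {K : Set X}
    (hK : IsClosed K) {b : X} (hb : b ∉ K) {w : ι → OnePoint X}
    (h : ∀ ε > (0 : ℝ), ∀ᶠ k in L, dd dist (b : OnePoint X) (w k) ≤ ε) :
    ∀ᶠ k in L, ¬ ∃ a ∈ K, w k = (a : OnePoint X) := by
  obtain ⟨ε, hε, hball⟩ := Metric.isOpen_iff.1 hK.isOpen_compl b hb
  filter_upwards [h (ε / 2) (half_pos hε)] with k hk ⟨a, ha, hwa⟩
  rw [hwa] at hk
  exact hball (show dist a b < ε by rw [dist_comm]; exact hk.trans_lt (half_lt_self hε)) ha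

end Metric

theorem eventually_not_exists_mem_of_tendsto_infty {X ι : Type*} [TopologicalSpace X]
    [T2Space X] {L : Filter ι} {K : Set X} (hK : IsCompact K) {w : ι → OnePoint X}
    (h : Tendsto w L (𝓝 Δ)) : ∀ᶠ k in L, ¬ ∃ a ∈ K, w k = (a : OnePoint X) :=
  (h.eventually_mem ((OnePoint.isOpen_compl_image_coe.2 ⟨hK.isClosed, hK⟩).mem_nhds
    OnePoint.infty_notMem_image_coe)).mono fun _ hk ⟨a, ha, hwa⟩ => hk ⟨a, ha, hwa.symm⟩

section TimeChange

theorem IsTimeBij.map_zero {l : ℝ → ℝ} (hl : IsTimeBij l) : l 0 = 0 := hl.2.2 0 le_rfl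

theorem LogSlopeLe.mono {l : ℝ → ℝ} {T T' ε : ℝ} (h : LogSlopeLe l T ε) (hT : T' ≤ T) :
    LogSlopeLe l T' ε :=
  fun s₁ s₂ h₁ h₂ h₃ => h s₁ s₂ h₁ h₂ (h₃.trans hT)

theorem LogSlopeLe.exp_neg_mul_le {l : ℝ → ℝ} {T ε : ℝ} (h : LogSlopeLe l T ε)
    (hl : StrictMono l) {s₁ s₂ : ℝ} (h₁ : 0 ≤ s₁) (h₂ : s₁ < s₂) (h₃ : s₂ ≤ T) :
    Real.exp (-ε) * (s₂ - s₁) ≤ l s₂ - l s₁ := by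
  have hd : 0 < s₂ - s₁ := sub_pos.2 h₂
  have hexp := Real.exp_le_exp.2 (abs_le.1 (h s₁ s₂ h₁ h₂ h₃)).1
  rwa [Real.exp_log (div_pos (sub_pos.2 (hl h₂)) hd), le_div_iff₀ hd] at hexp

theorem eventually_add_lt_of_logSlopeLe {ι : Type*} {L : Filter ι} {l : ι → ℝ → ℝ}
    (hl : ∀ k, StrictMono (l k)) {T : ℝ} (hD : ∀ ε > (0 : ℝ), ∀ᶠ k in L, LogSlopeLe (l k) T ε)
    {a b d : ℝ} (ha : 0 ≤ a) (hd : 0 ≤ d) (hab : a + d < b) (hbT : b ≤ T) :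
    ∀ᶠ k in L, l k a + d < l k b := by
  have hcont : Tendsto (fun ε => Real.exp (-ε) * (b - a)) (𝓝[>] 0) (𝓝 (b - a)) := by
    have hc : Continuous fun ε : ℝ => Real.exp (-ε) * (b - a) := by fun_prop
    simpa using (hc.tendsto 0).mono_left nhdsWithin_le_nhds
  obtain ⟨ε, hεd, hε⟩ :=
    ((hcont.eventually (lt_mem_nhds (by linarith : d < b - a))).and self_mem_nhdsWithin).exists
  filter_upwards [hD ε hε] with k hk
  linarith [hk.exp_neg_mul_le (hl k) ha (by linarith) hbT]

end TimeChange

section Convergence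

variable {X : Type*} [PseudoMetricSpace X] {x : Path X} {xk : ℕ → Path X}
  {l : ℕ → ℝ → ℝ} {t δ : ℝ} {K : Set X} {N : ℕ} {u : ℕ → ℝ}

theorem omegaMod_le_oscillation_add {z : Path X} {m : ℝ → ℝ} (hm : IsTimeBij m) {ε : ℝ}
    (hu0 : u 0 = 0) (hδ : 0 ≤ δ) (hgap : ∀ i < N, m (u i) + δ < m (u (i + 1)))
    (hx : ∀ s : ℝ, 0 ≤ s → s < u N → x s ≠ Δ) (hz : ∀ s : ℝ, 0 ≤ s → s < m (u N) → z s ≠ Δ)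
    (hclose : ∀ s : ℝ, 0 ≤ s → s < u N → dd dist (x s) (z (m s)) ≤ ε)
    (hend : ¬ (m (u N) ≤ t ∧ ∃ a ∈ K, z (m (u N)) = (a : OnePoint X))) :
    omegaMod dist t K z δ ≤ oscillation dist x N u + ENNReal.ofReal (2 * ε) := by
  have hsucc : ∀ i < N, u i < u (i + 1) := fun i hi =>
    hm.1.lt_iff_lt.1 (lt_succ_of_add_lt hδ hgap i hi)
  have hIco {i : ℕ} (hi : i < N) {s : ℝ} (hs : s ∈ Ico (u i) (u (i + 1))) : 0 ≤ s ∧ s < u N :=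
    ⟨(nonneg_of_lt_succ hu0 hsucc hi.le).trans hs.1,
      hs.2.trans_le (monotoneOn_Iic_of_lt_succ hsucc hi (le_refl N) hi)⟩
  have hadm : IsAdmissible z t K δ N (fun i => m (u i)) :=
    ⟨by simp only [hu0, hm.map_zero], hgap, hz, hend⟩
  refine (omegaMod_le_oscillation hadm).trans (oscillation_le fun i hi r₁ hr₁ r₂ hr₂ => ?_)
  obtain ⟨s₁, rfl⟩ := hm.2.1 r₁
  obtain ⟨s₂, rfl⟩ := hm.2.1 r₂
  have hs₁ : s₁ ∈ Ico (u i) (u (i + 1)) := ⟨hm.1.le_iff_le.1 hr₁.1, hm.1.lt_iff_lt.1 hr₁.2⟩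
  have hs₂ : s₂ ∈ Ico (u i) (u (i + 1)) := ⟨hm.1.le_iff_le.1 hr₂.1, hm.1.lt_iff_lt.1 hr₂.2⟩
  obtain ⟨h₁, h₁N⟩ := hIco hi hs₁
  obtain ⟨h₂, h₂N⟩ := hIco hi hs₂
  have htri : dd dist (z (m s₁)) (z (m s₂)) ≤ dd dist (x s₁) (x s₂) + 2 * ε := by
    have e₁ := dd_dist_triangle (hx s₁ h₁ h₁N) (z (m s₁)) (z (m s₂))
    have e₂ := dd_dist_triangle (hx s₂ h₂ h₂N) (x s₁) (z (m s₂))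
    rw [dd_dist_comm (z (m s₁)) (x s₁)] at e₁
    linarith [hclose s₁ h₁ h₁N, hclose s₂ h₂ h₂N]
  calc ENNReal.ofReal (dd dist (z (m s₁)) (z (m s₂)))
      ≤ ENNReal.ofReal (dd dist (x s₁) (x s₂)) + ENNReal.ofReal (2 * ε) :=
        (ENNReal.ofReal_le_ofReal htri).trans ENNReal.ofReal_add_le
    _ ≤ oscillation dist x N u + ENNReal.ofReal (2 * ε) := by
        gcongr
        exact ofReal_dd_le_oscillation hi hs₁ hs₂

def ConvergesBefore (xk : ℕ → Path X) (x : Path X) (l : ℕ → ℝ → ℝ) (r : ℝ) : Prop :=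
  (∀ᶠ k in atTop, ∀ s : ℝ, 0 ≤ s → s < l k r → xk k s ≠ Δ) ∧
    (∀ ε > (0 : ℝ), ∀ᶠ k in atTop, ∀ s : ℝ, 0 ≤ s → s < r → dd dist (x s) (xk k (l k s)) ≤ ε) ∧
    (∀ ε > (0 : ℝ), ∀ᶠ k in atTop, LogSlopeLe (l k) r ε)

theorem ConvergesBefore.mono {r r' : ℝ} (h : ConvergesBefore xk x l r)
    (hl : ∀ k, Monotone (l k)) (hr : r' ≤ r) : ConvergesBefore xk x l r' :=
  ⟨h.1.mono fun k hk s hs hsr => hk s hs (hsr.trans_le (hl k hr)),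
    fun ε hε => (h.2.1 ε hε).mono fun _ hk s hs hsr => hk s hs (hsr.trans_le hr),
    fun ε hε => (h.2.2 ε hε).mono fun _ hk => hk.mono hr⟩

theorem eventually_omegaMod_lt_of_convergesBefore (hl : ∀ k, IsTimeBij (l k)) (hδ : 0 ≤ δ)
    (hu0 : u 0 = 0) (hgap : ∀ i < N, u i + δ < u (i + 1))
    (hx : ∀ s : ℝ, 0 ≤ s → s < u N → x s ≠ Δ) (hc : ConvergesBefore xk x l (u N))
    (hend : ∀ᶠ k in atTop, ¬ (l k (u N) ≤ t ∧ ∃ a ∈ K, xk k (l k (u N)) = (a : OnePoint X)))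
    {y : ℝ≥0∞} (hy : oscillation dist x N u < y) :
    ∀ᶠ k in atTop, omegaMod dist t K (xk k) δ < y := by
  obtain ⟨η, hη, hηy⟩ := ENNReal.lt_iff_exists_add_pos_lt.1 hy
  obtain ⟨hz, hclose, hslope⟩ := hc
  have hsucc := lt_succ_of_add_lt hδ hgap
  have hgapk : ∀ᶠ k in atTop, ∀ i < N, l k (u i) + δ < l k (u (i + 1)) :=
    (finite_Iio N).eventually_all.2 fun i hi =>
      eventually_add_lt_of_logSlopeLe (fun k => (hl k).1) hslope
        (nonneg_of_lt_succ hu0 hsucc hi.le) hδ (hgap i hi)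
        (monotoneOn_Iic_of_lt_succ hsucc hi (le_refl N) hi)
  filter_upwards [hgapk, hz, hclose (η / 2) (by positivity), hend] with k hgap hz hclose hend
  calc omegaMod dist t K (xk k) δ
      ≤ oscillation dist x N u + ENNReal.ofReal (2 * (η / 2)) :=
        omegaMod_le_oscillation_add (hl k) hu0 hδ hgap hx hz hclose hend
    _ = oscillation dist x N u + η := by
        rw [mul_div_cancel₀ _ two_ne_zero, ENNReal.ofReal_coe_nnreal]
    _ < y := hηy

theorem eventually_not_endpoint (hl : ∀ k, IsTimeBij (l k)) (ht : 0 ≤ t) (hK : IsClosed K)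
    {r : ℝ} (hslope : ∀ ε > (0 : ℝ), ∀ᶠ k in atTop, LogSlopeLe (l k) r ε) (hxr : x r ≠ Δ)
    (hclose : ∀ ε > (0 : ℝ), ∀ᶠ k in atTop, dd dist (x r) (xk k (l k r)) ≤ ε)
    (hend : ¬ (r ≤ t ∧ ∃ a ∈ K, x r = (a : OnePoint X))) :
    ∀ᶠ k in atTop, ¬ (l k r ≤ t ∧ ∃ a ∈ K, xk k (l k r) = (a : OnePoint X)) := by
  rcases le_or_gt r t with hrt | htr
  · obtain ⟨b, hb⟩ := OnePoint.ne_infty_iff_exists.1 hxr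
    have hbK : b ∉ K := fun hbK => hend ⟨hrt, b, hbK, hb.symm⟩
    exact (eventually_not_exists_mem_of_dd_le hK hbK (hb ▸ hclose)).mono fun _ hk h => hk h.2
  · filter_upwards [eventually_add_lt_of_logSlopeLe (fun k => (hl k).1) hslope le_rfl ht
      (by rwa [zero_add]) le_rfl] with k hk h
    rw [(hl k).map_zero, zero_add] at hk
    exact h.1.not_gt hk

theorem eventually_omegaMod_lt_of_ne_infty (hl : ∀ k, IsTimeBij (l k)) (ht : 0 ≤ t)
    (hK : IsClosed K) (hδ : 0 ≤ δ) (hadm : IsAdmissible x t K δ N u) (hxN : x (u N) ≠ Δ)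
    (hc : ConvergesBefore xk x l (u N))
    (hclose : ∀ ε > (0 : ℝ), ∀ᶠ k in atTop, dd dist (x (u N)) (xk k (l k (u N))) ≤ ε)
    {y : ℝ≥0∞} (hy : oscillation dist x N u < y) :
    ∀ᶠ k in atTop, omegaMod dist t K (xk k) δ < y :=
  eventually_omegaMod_lt_of_convergesBefore hl hδ hadm.1 hadm.2.1 hadm.2.2.1 hc
    (eventually_not_endpoint hl ht hK hc.2.2 hxN hclose hadm.2.2.2) hy

theorem ConvLoc.exists_timeChange (hx : IsDexp x) (hxk : ∀ k, IsDexp (xk k))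
    (h : ConvLoc dist xk x) :
    ∃ l : ℕ → ℝ → ℝ, (∀ k, IsTimeBij (l k)) ∧
      (Case1 x → ConvergesBefore xk x l (xiR x) ∧
        Tendsto (fun k => xk k (l k (xiR x))) atTop (𝓝 Δ)) ∧
      ∀ r : ℝ, 0 ≤ r → x r ≠ Δ → ConvergesBefore xk x l r ∧
        ∀ ε > (0 : ℝ), ∀ᶠ k in atTop, dd dist (x r) (xk k (l k r)) ≤ ε := by
  obtain ⟨l, hl, hcase1, hcase2⟩ := h
  refine ⟨l, fun k => (hl k).1, fun hC => ?_, fun r hr hxr => ?_⟩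
  · obtain ⟨hz, hclose, hΔ, hslope⟩ := hcase1 hC
    exact ⟨⟨hz, hclose, hslope⟩, hΔ⟩
  by_cases hC : Case1 x
  · obtain ⟨hz, hclose, -, hslope⟩ := hcase1 hC
    have hrξ := hx.lt_xiR hC.1 hxr
    exact ⟨ConvergesBefore.mono ⟨hz, hclose, hslope⟩ (fun k => (hl k).1.1.monotone) hrξ.le,
      fun ε hε => (hclose ε hε).mono fun _ hk => hk r hr hrξ⟩
  · obtain ⟨hz, hclose, hslope⟩ := hcase2 hC r hr hxr
    exact ⟨⟨hz.mono fun k hk s _ hs h => hk ((hxk k).infty_of_le hs.le h),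
      fun ε hε => (hclose ε hε).mono fun _ hk s hs hsr => hk s hs hsr.le, hslope⟩,
      fun ε hε => (hclose ε hε).mono fun _ hk => hk r hr le_rfl⟩

end Convergence

theorem ConvLoc.eventually_omegaMod_lt {X : Type*} [MetricSpace X] [WeaklyLocallyCompactSpace X]
    {x : Path X} {xk : ℕ → Path X} (hx : IsDexp x) (hxk : ∀ k, IsDexp (xk k))
    (hconv : ConvLoc dist xk x) {t δ : ℝ} {K : Set X} (ht : 0 ≤ t) (hK : IsCompact K)
    (hδ : 0 ≤ δ) {y : ℝ≥0∞} (hy : omegaMod dist t K x δ < y) :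
    ∀ᶠ k in atTop, omegaMod dist t K (xk k) δ < y := by
  obtain ⟨N, u, hadm, hosc⟩ := exists_isAdmissible_of_omegaMod_lt hy
  obtain ⟨l, hl, hcase1, hthrough⟩ := hconv.exists_timeChange hx hxk
  have hnonneg {i : ℕ} (hi : i ≤ N) : 0 ≤ u i :=
    nonneg_of_lt_succ hadm.1 (lt_succ_of_add_lt hδ hadm.2.1) hi
  have huN : 0 ≤ u N := hnonneg le_rfl
  by_cases hxN : x (u N) = Δ
  swap
  · obtain ⟨hc, hclose⟩ := hthrough _ huN hxN
    exact eventually_omegaMod_lt_of_ne_infty hl ht hK.isClosed hδ hadm hxN hc hclose hosc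
  by_cases hC : Case1 x
  · obtain ⟨hc, hΔ⟩ := hcase1 hC
    rw [hx.xiR_eq huN hadm.2.2.1 hxN] at hc hΔ
    exact eventually_omegaMod_lt_of_convergesBefore hl hδ hadm.1 hadm.2.1 hadm.2.2.1 hc
      ((eventually_not_exists_mem_of_tendsto_infty hK hΔ).mono fun _ hk h => hk h.2) hosc
  rcases N with _ | M
  · exact absurd (hx.case1_of_apply_zero (hadm.1 ▸ hxN)) hC
  obtain ⟨s, ⟨hMs, hsN⟩, hsK⟩ := hx.exists_notMem_of_not_isCompact
    (fun h => hC ⟨⟨_, hxN⟩, h⟩) hK (hadm.2.1 M M.lt_add_one) hadm.2.2.1 hxN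
  have hs : 0 ≤ s := by linarith [hnonneg M.le_succ]
  have hxs : x s ≠ Δ := hadm.2.2.1 s hs hsN
  obtain ⟨hc, hclose⟩ := hthrough s hs hxs
  refine eventually_omegaMod_lt_of_ne_infty hl ht hK.isClosed hδ
    (hadm.update_last hMs hsN.le fun h => hsK h.2) ?_ ?_ ?_
    ((oscillation_update_last_le hsN.le).trans_lt hosc) <;> rw [Function.update_self]
  exacts [hxs, hc, hclose]

theorem omegaMod_upperSemicontinuous_general
    {S : Type*} [MetricSpace S] [LocallyCompactSpace S]
    (T : TopologicalSpace (DlocT S)) (hPol : @PolishSpace _ T)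
    (hT : ∀ (xk : ℕ → DlocT S) (x : DlocT S),
      Tendsto xk atTop (@nhds _ T x) ↔ ConvLoc dist (fun k => (xk k).1) x.1)
    (t : ℝ) (ht : 0 ≤ t) (K : Set S) (hK : IsCompact K) (δ : ℝ) (hδ : 0 < δ) :
    @UpperSemicontinuous (DlocT S) ℝ≥0∞ T _ (fun x => omegaMod dist t K x.1 δ) := by
  let _ := T
  have := hPol
  refine upperSemicontinuous_iff_isOpen_preimage.2 fun y => ?_
  rw [← isClosed_compl_iff]
  refine IsSeqClosed.isClosed fun xk x hxk hlim hx => ?_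
  obtain ⟨k, hk⟩ := (ConvLoc.eventually_omegaMod_lt x.2.1 (fun k => (xk k).2.1)
    ((hT xk x).1 hlim) ht hK hδ.le hx).exists
  exact hxk k hk

/-- (Proposition 2.8 ii)). For every `t ≥ 0`, every compact `K ⊆ S` and
every `δ > 0`, the map `x ↦ ω'_{t,K,x}(δ)` is upper semi-continuous from `𝔻_loc(S)` (with
the local Skorokhod topology) to `[0,∞]`. -/
theorem omegaMod_upperSemicontinuous
    {S : Type*} [MetricSpace S] [SecondCountableTopology S] [LocallyCompactSpace S]
    (T : TopologicalSpace (DlocT S)) (hPol : @PolishSpace _ T)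
    (hT : ∀ (xk : ℕ → DlocT S) (x : DlocT S),
      Tendsto xk atTop (@nhds _ T x) ↔ ConvLoc dist (fun k => (xk k).1) x.1)
    (t : ℝ) (ht : 0 ≤ t) (K : Set S) (hK : IsCompact K) (δ : ℝ) (hδ : 0 < δ) :
    @UpperSemicontinuous (DlocT S) ℝ≥0∞ T _ (fun x => omegaMod dist t K x.1 δ) :=
  omegaMod_upperSemicontinuous_general T hPol hT t ht K hK δ hδ

end LocSkor
end
end

section
/- (i) If g ∈ C^{≠0}(S,ℝ₊) is bounded and x ∈ D(S), then g·x ∈ D(S). (ii) If g ∈ C̃^{≠0}(S,ℝ₊) and x ∈ D_loc(S), then g·x ∈ D_loc(S). -/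
open Filter Topology Set MeasureTheory
open scoped ENNReal NNReal

noncomputable section

namespace LocSkor

variable {S : Type*} [TopologicalSpace S]

/-!
Before the exit time `τ` of `{g ≠ 0}` the path and its left limits lie in `{g ≠ 0}`, where `g` is
continuous and positive, so by compactness `g(x_u)` is bounded below by a positive constant on each
`[0, b] ⊂ [0, τ)`. Hence `A^g` is finite, continuous and strictly increasing on `[0, τ)` with image
`[0, A^g_τ)`: on `[0, A^g_τ)` the path `g·x = x ∘ (A^g)⁻¹` inherits right-continuity and left
limits from `x`, and from `A^g_τ` on it is constant. If `g ≤ C` on the range of `g·x` (everywhere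
in (i), on its compact closure in (ii)) and `A^g_τ < ∞`, then `τ < ∞`, for otherwise
`A^g_τ ≥ ∫_0^∞ du / C = ∞`. So `g·x` explodes only at `A^g_τ < ∞`, which is impossible in (i) as
`x_τ ∈ S`, and in (ii) its left limit there is the left limit of `x` at `τ`, which exists in `S`
because `x ∈ 𝔻_loc(S)`.
-/

theorem _root_.IsCompact.exists_pos_forall_le {X : Type*} [TopologicalSpace X] {K : Set X}
    (hK : IsCompact K) {h : X → ℝ} (hloc : ∀ u ∈ K, ∃ ε > 0, ∀ᶠ v in 𝓝[K] u, ε ≤ h v) :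
    ∃ ε > 0, ∀ v ∈ K, ε ≤ h v := by
  refine hK.induction_on (p := fun s => ∃ ε > 0, ∀ v ∈ s, ε ≤ h v) ⟨1, one_pos, by simp⟩
    ?_ ?_ fun u hu => ?_
  · rintro s t hst ⟨ε, hε, hle⟩
    exact ⟨ε, hε, fun v hv => hle v (hst hv)⟩
  · rintro s t ⟨ε, hε, hs⟩ ⟨δ, hδ, ht⟩
    refine ⟨min ε δ, lt_min hε hδ, fun v hv => ?_⟩
    rcases hv with hv | hv
    exacts [(min_le_left _ _).trans (hs v hv), (min_le_right _ _).trans (ht v hv)]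
  · obtain ⟨ε, hε, hev⟩ := hloc u hu
    exact ⟨{v | ε ≤ h v}, hev, ε, hε, fun v hv => hv⟩

section ExplosionTime

variable {y : Path S}

lemma isClosed_xiSet (hneg : ∀ t ≤ (0:ℝ), y t = y 0)
    (hmono : ∀ ⦃s t : ℝ⦄, s ≤ t → y s = OnePoint.infty → y t = OnePoint.infty)
    (hrc : ∀ t : ℝ, 0 ≤ t → y t ≠ OnePoint.infty → Tendsto y (𝓝[>] t) (𝓝 (y t))) :
    IsClosed (xiSet y) := by
  refine isOpen_compl_iff.1 (isOpen_iff_mem_nhds.2 fun t (ht : y t ≠ OnePoint.infty) => ?_)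
  have ht' : y (max t 0) ≠ OnePoint.infty := by
    rcases le_total t 0 with h | h
    · rwa [max_eq_right h, ← hneg t h]
    · rwa [max_eq_left h]
  have hS : range ((↑) : S → OnePoint S) ∈ 𝓝 (y (max t 0)) :=
    OnePoint.isOpen_range_coe.mem_nhds (OnePoint.ne_infty_iff_exists.1 ht')
  obtain ⟨d, hd, hsub⟩ := mem_nhdsGT_iff_exists_Ioo_subset.1 (hrc _ (le_max_right t 0) ht' hS)
  filter_upwards [Iio_mem_nhds ((le_max_left t 0).trans_lt hd)] with s hs (hs' : _ = _)
  rcases le_or_gt s (max t 0) with h | h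
  · exact ht' (hmono h hs')
  · obtain ⟨a, ha⟩ := hsub ⟨h, hs⟩
    exact OnePoint.coe_ne_infty a (ha.trans hs')

lemma xiSet_eq_Ici (hy : IsDexp y) (hexp : explodes y) (hpos : 0 < xiR y) :
    xiSet y = Ici (xiR y) := by
  have hbdd : BddBelow (xiSet y) := by
    by_contra h
    exact hpos.ne' (Real.sInf_of_not_bddBelow h)
  have hmem : xiR y ∈ xiSet y := hy.2.2.1.csInf_mem hexp hbdd
  ext t
  exact ⟨fun ht => csInf_le hbdd ht, fun ht => hy.2.1 ht hmem⟩

end ExplosionTime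

instance (t : ℝ≥0∞) : (leftFilter t).NeBot := by
  unfold leftFilter
  split <;> infer_instance

lemma leftLimValE_eq [T2Space (OnePoint S)] {x : Path S} {t : ℝ≥0∞} {a : OnePoint S}
    (h : Tendsto x (leftFilter t) (𝓝 a)) : leftLimValE x t = a := by
  have hex : ∃ b, Tendsto x (leftFilter t) (𝓝 b) := ⟨a, h⟩
  rw [leftLimValE, dif_pos hex]
  exact tendsto_nhds_unique hex.choose_spec h

section TimeChange

variable {g : S → ℝ} {x : Path S} {s s' t b c : ℝ}

def exitTime (g : S → ℝ) (x : Path S) : ℝ≥0∞ := tauU {a : S | g a ≠ 0} x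

def IsBeforeExit (g : S → ℝ) (x : Path S) (s : ℝ) : Prop :=
  0 ≤ s ∧ ENNReal.ofReal s < exitTime g x

lemma exitTime_le (h0 : 0 ≤ t)
    (h : (0 < t ∧ ¬∃ a, g a ≠ 0 ∧ Tendsto x (𝓝[<] t) (𝓝 (a : OnePoint S))) ∨
      ¬∃ a, g a ≠ 0 ∧ x t = (a : OnePoint S)) :
    exitTime g x ≤ ENNReal.ofReal t :=
  iInf₂_le t ⟨h0, h⟩

namespace IsBeforeExit

lemma exists_eq_coe (hs : IsBeforeExit g x s) : ∃ a, g a ≠ 0 ∧ x s = (a : OnePoint S) := by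
  by_contra h
  exact (exitTime_le hs.1 (Or.inr h)).not_gt hs.2

lemma exists_tendsto_nhdsLT (hs : IsBeforeExit g x s) (hpos : 0 < s) :
    ∃ a, g a ≠ 0 ∧ Tendsto x (𝓝[<] s) (𝓝 (a : OnePoint S)) := by
  by_contra h
  exact (exitTime_le hs.1 (Or.inl ⟨hpos, h⟩)).not_gt hs.2

lemma ne_infty (hs : IsBeforeExit g x s) : x s ≠ OnePoint.infty := by
  obtain ⟨a, -, ha⟩ := hs.exists_eq_coe
  exact ha ▸ OnePoint.coe_ne_infty a

lemma mono (hs : IsBeforeExit g x s) (h0 : 0 ≤ s') (h : s' ≤ s) : IsBeforeExit g x s' :=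
  ⟨h0, (ENNReal.ofReal_le_ofReal h).trans_lt hs.2⟩

lemma exists_gt (hs : IsBeforeExit g x s) : ∃ s', s < s' ∧ IsBeforeExit g x s' := by
  obtain ⟨r, -, hsr, hrT⟩ := ENNReal.lt_iff_exists_real_btwn.1 hs.2
  have hsr' : s < r := (ENNReal.ofReal_lt_ofReal_iff'.1 hsr).1
  exact ⟨r, hsr', hs.1.trans hsr'.le, hrT⟩

end IsBeforeExit

lemma isBeforeExit_iff (hT : exitTime g x ≠ ⊤) :
    IsBeforeExit g x s ↔ 0 ≤ s ∧ s < (exitTime g x).toReal :=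
  and_congr_right fun h0 => ENNReal.ofReal_lt_iff_lt_toReal h0 hT

lemma continuousAt_gOP_coe (hg : Czero g) {a : S} (ha : g a ≠ 0) :
    ContinuousAt (gOP g) (a : OnePoint S) :=
  OnePoint.continuousAt_coe.2 (hg.2.2.continuousAt (hg.2.1.isOpen_compl.mem_nhds ha))

namespace IsBeforeExit

variable (hg : Czero g) (hx : IsDexp x)
include hg

lemma gOP_pos (hs : IsBeforeExit g x s) : 0 < gOP g (x s) := by
  obtain ⟨a, ha, hxa⟩ := hs.exists_eq_coe
  rw [hxa]
  exact (hg.1 a).lt_of_ne' ha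

include hx

lemma tendsto_gOP_nhdsGE (hs : IsBeforeExit g x s) :
    Tendsto (fun v => gOP g (x v)) (𝓝[≥] s) (𝓝 (gOP g (x s))) := by
  obtain ⟨a, ha, hxa⟩ := hs.exists_eq_coe
  have hrc := continuousWithinAt_Ioi_iff_Ici.1 (hx.2.2.2.1 s hs.1 hs.ne_infty)
  rw [ContinuousWithinAt, hxa] at hrc
  rw [hxa]
  exact (continuousAt_gOP_coe hg ha).tendsto.comp hrc

lemma exists_tendsto_gOP_nhdsLT (hs : IsBeforeExit g x s) :
    ∃ c > 0, Tendsto (fun v => gOP g (x v)) (𝓝[<] s) (𝓝 c) := by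
  rcases hs.1.eq_or_lt with h0 | hpos
  · subst h0
    refine ⟨gOP g (x 0), hs.gOP_pos hg, tendsto_const_nhds.congr' ?_⟩
    filter_upwards [self_mem_nhdsWithin] with v hv
    rw [hx.1 v (le_of_lt hv)]
  · obtain ⟨a, ha, hlim⟩ := hs.exists_tendsto_nhdsLT hpos
    exact ⟨g a, (hg.1 a).lt_of_ne' ha, (continuousAt_gOP_coe hg ha).tendsto.comp hlim⟩

lemma exists_pos_eventually_le_gOP (hs : IsBeforeExit g x s) :
    ∃ ε > 0, ∀ᶠ v in 𝓝 s, ε ≤ gOP g (x v) := by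
  obtain ⟨c, hc, hleft⟩ := hs.exists_tendsto_gOP_nhdsLT hg hx
  have hp := hs.gOP_pos hg
  refine ⟨min (c / 2) (gOP g (x s) / 2), lt_min (half_pos hc) (half_pos hp), ?_⟩
  rw [← nhdsLT_sup_nhdsGE, eventually_sup]
  exact ⟨(hleft.eventually (eventually_ge_nhds (half_lt_self hc))).mono
      fun v hv => (min_le_left _ _).trans hv,
    ((hs.tendsto_gOP_nhdsGE hg hx).eventually (eventually_ge_nhds (half_lt_self hp))).mono
      fun v hv => (min_le_right _ _).trans hv⟩

lemma exists_pos_le_gOP (hb : IsBeforeExit g x b) :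
    ∃ ε > 0, ∀ v ∈ Icc 0 b, ε ≤ gOP g (x v) :=
  isCompact_Icc.exists_pos_forall_le fun _ hu =>
    let ⟨ε, hε, hev⟩ := (hb.mono hu.1 hu.2).exists_pos_eventually_le_gOP hg hx
    ⟨ε, hε, hev.filter_mono nhdsWithin_le_nhds⟩

end IsBeforeExit

lemma Ag_of_le (h0 : 0 ≤ s) (hT : ENNReal.ofReal s ≤ exitTime g x) :
    Ag g x s = ∫⁻ u in Ioo 0 s, (ENNReal.ofReal (gOP g (x u)))⁻¹ :=
  if_pos ⟨h0, hT⟩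

lemma Ag_of_exitTime_lt (hT : exitTime g x < ENNReal.ofReal s) : Ag g x s = ⊤ :=
  if_neg fun h => h.2.not_gt hT

@[simp] lemma Ag_zero : Ag g x 0 = 0 := by
  simp [Ag_of_le le_rfl (by simp : ENNReal.ofReal 0 ≤ exitTime g x)]

lemma Ag_le_Ag_add (h0 : 0 ≤ s) (hss' : s ≤ s') (hT : ENNReal.ofReal s' ≤ exitTime g x) :
    Ag g x s' ≤ Ag g x s + ∫⁻ u in Ico s s', (ENNReal.ofReal (gOP g (x u)))⁻¹ := by
  rw [Ag_of_le (h0.trans hss') hT, Ag_of_le h0 ((ENNReal.ofReal_le_ofReal hss').trans hT)]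
  refine (lintegral_mono_set fun u hu => ?_).trans (lintegral_union_le _ _ _)
  exact (lt_or_ge u s).imp (fun h => ⟨hu.1, h⟩) fun h => ⟨h, hu.2⟩

lemma Ag_add_le_Ag (h0 : 0 ≤ s) (hss' : s ≤ s') (hT : ENNReal.ofReal s' ≤ exitTime g x) :
    Ag g x s + ∫⁻ u in Ioo s s', (ENNReal.ofReal (gOP g (x u)))⁻¹ ≤ Ag g x s' := by
  rw [Ag_of_le (h0.trans hss') hT, Ag_of_le h0 ((ENNReal.ofReal_le_ofReal hss').trans hT),
    ← lintegral_union measurableSet_Ioo (Ioo_disjoint_Ioo.2 (by simp))]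
  exact lintegral_mono_set (union_subset (Ioo_subset_Ioo_right hss') (Ioo_subset_Ioo_left h0))

lemma Ag_mono (h0 : 0 ≤ s) (hss' : s ≤ s') : Ag g x s ≤ Ag g x s' := by
  rcases le_or_gt (ENNReal.ofReal s') (exitTime g x) with hT | hT
  · exact le_self_add.trans (Ag_add_le_Ag h0 hss' hT)
  · exact (Ag_of_exitTime_lt hT).symm ▸ le_top

lemma lt_of_Ag_lt (h0 : 0 ≤ s') (h : Ag g x s < Ag g x s') : s < s' :=
  lt_of_not_ge fun hle => (Ag_mono h0 hle).not_gt h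

namespace IsBeforeExit

variable (hg : Czero g) (hx : IsDexp x)
include hg hx

lemma exists_Ag_le_add_mul (hb : IsBeforeExit g x b) :
    ∃ K : ℝ≥0, ∀ s s', 0 ≤ s → s ≤ s' → s' ≤ b →
      Ag g x s' ≤ Ag g x s + ENNReal.ofReal (K * (s' - s)) := by
  obtain ⟨ε, hε, hle⟩ := hb.exists_pos_le_gOP hg hx
  refine ⟨ε⁻¹.toNNReal, fun s s' h0 hss' hs'b => ?_⟩
  refine (Ag_le_Ag_add h0 hss' ((ENNReal.ofReal_le_ofReal hs'b).trans hb.2.le)).trans ?_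
  gcongr
  calc ∫⁻ u in Ico s s', (ENNReal.ofReal (gOP g (x u)))⁻¹
      ≤ ∫⁻ _ in Ico s s', ENNReal.ofReal ε⁻¹ := by
        refine setLIntegral_mono' measurableSet_Ico fun u hu => ?_
        rw [ENNReal.ofReal_inv_of_pos hε, ENNReal.inv_le_inv]
        exact ENNReal.ofReal_le_ofReal (hle u ⟨h0.trans hu.1, hu.2.le.trans hs'b⟩)
    _ = ENNReal.ofReal (ε⁻¹.toNNReal * (s' - s)) := by
        rw [setLIntegral_const, Real.volume_Ico, ← ENNReal.ofReal_mul (inv_nonneg.2 hε.le),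
          Real.coe_toNNReal _ (inv_nonneg.2 hε.le)]

lemma Ag_lt_top (hs : IsBeforeExit g x s) : Ag g x s < ⊤ := by
  obtain ⟨K, hK⟩ := hs.exists_Ag_le_add_mul hg hx
  refine (hK 0 s le_rfl hs.1 le_rfl).trans_lt ?_
  rw [Ag_zero, zero_add]
  exact ENNReal.ofReal_lt_top

lemma lipschitzOnWith_toReal_Ag (hb : IsBeforeExit g x b) :
    ∃ K, LipschitzOnWith K (fun s => (Ag g x s).toReal) (Icc 0 b) := by
  obtain ⟨K, hK⟩ := hb.exists_Ag_le_add_mul hg hx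
  have hfin : ∀ s ∈ Icc 0 b, Ag g x s ≠ ⊤ := fun s hs =>
    ((hb.mono hs.1 hs.2).Ag_lt_top hg hx).ne
  refine ⟨K, .of_le_add_mul _ fun s hs s' hs' => ?_⟩
  rcases le_total s s' with h | h
  · exact (ENNReal.toReal_mono (hfin s' hs') (Ag_mono hs.1 h)).trans
      (le_add_of_nonneg_right (by positivity))
  · calc (Ag g x s).toReal ≤ (Ag g x s' + ENNReal.ofReal (K * (s - s'))).toReal :=
          ENNReal.toReal_mono (ENNReal.add_ne_top.2 ⟨hfin s' hs', ENNReal.ofReal_ne_top⟩)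
            (hK s' s hs'.1 h hs.2)
      _ = (Ag g x s').toReal + K * dist s s' := by
          rw [ENNReal.toReal_add (hfin s' hs') ENNReal.ofReal_ne_top,
            ENNReal.toReal_ofReal (by nlinarith [K.2]), Real.dist_eq,
            abs_of_nonneg (sub_nonneg.2 h)]

lemma setLIntegral_Ioo_pos (hs : IsBeforeExit g x s) (hss' : s < s') :
    0 < ∫⁻ u in Ioo s s', (ENNReal.ofReal (gOP g (x u)))⁻¹ := by
  obtain ⟨d, hsd, hd⟩ := mem_nhdsGE_iff_exists_Ico_subset.1
    ((hs.tendsto_gOP_nhdsGE hg hx).eventually (eventually_le_nhds (lt_add_one (gOP g (x s)))))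
  calc 0 < ∫⁻ _ in Ioo s (min d s'), (ENNReal.ofReal (gOP g (x s) + 1))⁻¹ := by
        rw [setLIntegral_const, Real.volume_Ioo]
        exact ENNReal.mul_pos (by simp) (by simpa using lt_min hsd hss')
    _ ≤ ∫⁻ u in Ioo s (min d s'), (ENNReal.ofReal (gOP g (x u)))⁻¹ :=
        setLIntegral_mono' measurableSet_Ioo fun u hu => ENNReal.inv_le_inv.2
          (ENNReal.ofReal_le_ofReal (hd ⟨hu.1.le, hu.2.trans_le (min_le_left _ _)⟩))
    _ ≤ _ := lintegral_mono_set (Ioo_subset_Ioo_right (min_le_right _ _))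

end IsBeforeExit

lemma Ag_lt_Ag (hg : Czero g) (hx : IsDexp x) (h0 : 0 ≤ s) (hss' : s < s')
    (hT : ENNReal.ofReal s' ≤ exitTime g x) : Ag g x s < Ag g x s' := by
  have hs : IsBeforeExit g x s :=
    ⟨h0, ((ENNReal.ofReal_lt_ofReal_iff (h0.trans_lt hss')).2 hss').trans_le hT⟩
  exact (ENNReal.lt_add_right (hs.Ag_lt_top hg hx).ne
    (hs.setLIntegral_Ioo_pos hg hx hss').ne').trans_le (Ag_add_le_Ag h0 hss'.le hT)

lemma IsBeforeExit.Ag_le_Atotal (hs : IsBeforeExit g x s) : Ag g x s ≤ Atotal g x := by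
  rw [Ag_of_le hs.1 hs.2.le]
  exact lintegral_mono_set fun u hu =>
    ⟨hu.1, (ENNReal.ofReal_le_ofReal hu.2.le).trans hs.2.le⟩

lemma Atotal_eq_iSup : Atotal g x = ⨆ (s) (_ : IsBeforeExit g x s), Ag g x s := by
  refine le_antisymm ?_ (iSup₂_le fun s hs => hs.Ag_le_Atotal)
  let B := {u : ℝ | 0 < u ∧ ENNReal.ofReal u < exitTime g x}
  have hB : B = ⋃ q : {q : ℚ // IsBeforeExit g x q}, Ioo 0 (q : ℝ) := by
    ext u
    simp only [B, mem_ofPred_eq, mem_iUnion, mem_Ioo]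
    constructor
    · rintro ⟨hu0, huT⟩
      obtain ⟨r, -, hur, hrT⟩ := ENNReal.lt_iff_exists_real_btwn.1 huT
      obtain ⟨q, huq, hqr⟩ := exists_rat_btwn (ENNReal.ofReal_lt_ofReal_iff'.1 hur).1
      exact ⟨⟨q, (hu0.trans huq).le, (ENNReal.ofReal_le_ofReal hqr.le).trans_lt hrT⟩, hu0, huq⟩
    · rintro ⟨q, hu0, huq⟩
      exact ⟨hu0, (ENNReal.ofReal_le_ofReal huq.le).trans_lt q.2.2⟩
  have hdir : Directed (· ⊆ ·) fun q : {q : ℚ // IsBeforeExit g x q} => Ioo (0 : ℝ) q :=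
    Monotone.directed_le fun q q' h => Ioo_subset_Ioo_right (by exact_mod_cast h)
  -- `setLIntegral_iUnion_of_directed` needs no measurability of the integrand
  calc Atotal g x
      ≤ ∫⁻ u in B ∪ {(exitTime g x).toReal}, (ENNReal.ofReal (gOP g (x u)))⁻¹ := by
        refine lintegral_mono_set fun u ⟨hu0, huT⟩ => ?_
        rcases huT.lt_or_eq with hlt | heq
        · exact Or.inl ⟨hu0, hlt⟩
        · exact Or.inr (by rw [mem_singleton_iff, exitTime, ← heq, ENNReal.toReal_ofReal hu0.le])
    _ ≤ ∫⁻ u in B, (ENNReal.ofReal (gOP g (x u)))⁻¹ := by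
        refine (lintegral_union_le _ _ _).trans_eq ?_
        rw [setLIntegral_measure_zero _ _ Real.volume_singleton, add_zero]
    _ = ⨆ q : {q : ℚ // IsBeforeExit g x q}, Ag g x q := by
        rw [hB, setLIntegral_iUnion_of_directed _ hdir]
        exact iSup_congr fun q => (Ag_of_le q.2.1 q.2.2.le).symm
    _ ≤ _ := iSup_le fun q => le_iSup₂_of_le (q : ℝ) q.2 le_rfl

lemma isBeforeExit_zero_of_Atotal_ne_zero (h : Atotal g x ≠ 0) : IsBeforeExit g x 0 := by
  by_contra h0
  refine h (le_antisymm ?_ bot_le)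
  rw [Atotal_eq_iSup]
  exact iSup₂_le fun s hs => absurd (hs.mono le_rfl hs.1) h0

lemma IsBeforeExit.Ag_lt_Atotal (hg : Czero g) (hx : IsDexp x) (hs : IsBeforeExit g x s) :
    Ag g x s < Atotal g x := by
  obtain ⟨s', hss', hs'⟩ := hs.exists_gt
  exact (Ag_lt_Ag hg hx hs.1 hss' hs'.2.le).trans_le hs'.Ag_le_Atotal

lemma exists_Ag_eq (hg : Czero g) (hx : IsDexp x) (h0 : 0 ≤ t)
    (ht : ENNReal.ofReal t < Atotal g x) :
    ∃ s, IsBeforeExit g x s ∧ Ag g x s = ENNReal.ofReal t := by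
  rw [Atotal_eq_iSup] at ht
  obtain ⟨b, hb⟩ := lt_iSup_iff.1 ht
  obtain ⟨hb, htb⟩ := lt_iSup_iff.1 hb
  obtain ⟨K, hK⟩ := hb.lipschitzOnWith_toReal_Ag hg hx
  have htb' : t ≤ (Ag g x b).toReal :=
    ((ENNReal.ofReal_lt_iff_lt_toReal h0 (hb.Ag_lt_top hg hx).ne).1 htb).le
  have ht' : t ∈ Icc (Ag g x 0).toReal (Ag g x b).toReal := ⟨by simpa using h0, htb'⟩
  obtain ⟨s, hs, hst⟩ := intermediate_value_Icc hb.1 hK.continuousOn ht'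
  have hs' := hb.mono hs.1 hs.2
  exact ⟨s, hs', by rw [← hst, ENNReal.ofReal_toReal (hs'.Ag_lt_top hg hx).ne]⟩

lemma Atotal_eq_top_of_le (hT : exitTime g x = ⊤) {C : ℝ}
    (hC : ∀ u, 0 ≤ u → gOP g (x u) ≤ C) : Atotal g x = ⊤ := by
  have hset : {u : ℝ | 0 < u ∧ ENNReal.ofReal u ≤ exitTime g x} = Ioi 0 := by
    ext u
    simp [hT]
  refine top_unique ?_
  calc ⊤ = ∫⁻ _ in Ioi (0 : ℝ), (ENNReal.ofReal C)⁻¹ := by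
        rw [setLIntegral_const, Real.volume_Ioi, ENNReal.mul_top (by simp)]
    _ ≤ ∫⁻ u in Ioi (0 : ℝ), (ENNReal.ofReal (gOP g (x u)))⁻¹ :=
        setLIntegral_mono' measurableSet_Ioi fun u hu =>
          ENNReal.inv_le_inv.2 (ENNReal.ofReal_le_ofReal (hC u (le_of_lt hu)))
    _ = Atotal g x := by rw [Atotal, ← hset]; rfl

lemma taug_ofReal_of_Ag_eq (hg : Czero g) (hx : IsDexp x) (hs : IsBeforeExit g x s)
    (hA : Ag g x s = ENNReal.ofReal t) : taug g x (ENNReal.ofReal t) = ENNReal.ofReal s := by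
  refine le_antisymm (iInf₂_le s ⟨hs.1, hA.ge⟩) (le_iInf₂ fun s' hs' => ?_)
  refine ENNReal.ofReal_le_ofReal (le_of_not_gt fun hlt => ?_)
  exact (Ag_lt_Ag hg hx hs'.1 hlt hs.2.le).not_ge (hA ▸ hs'.2)

lemma taug_ofReal_of_Atotal_le (hg : Czero g) (hx : IsDexp x)
    (ht : Atotal g x ≤ ENNReal.ofReal t) : taug g x (ENNReal.ofReal t) = exitTime g x := by
  refine le_antisymm (le_of_forall_gt fun r hr => ?_) (le_iInf₂ fun s hs => ?_)
  · obtain ⟨r', hr'0, hTr', hr'r⟩ := ENNReal.lt_iff_exists_real_btwn.1 hr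
    refine (iInf₂_le r' ⟨hr'0, ?_⟩).trans_lt hr'r
    rw [Ag_of_exitTime_lt hTr']
    exact le_top
  · exact le_of_not_gt fun hlt => ((IsBeforeExit.Ag_lt_Atotal hg hx ⟨hs.1, hlt⟩).trans_le
      (ht.trans hs.2)).false

open Classical in
/-- The value of `g·x` from time `A^g_{τ}` on: `x_{τ-}` if this left limit exists in `{g = 0}`,
and `x_τ` otherwise (which is `Δ` when `τ = ∞`). -/
noncomputable def terminalValue (g : S → ℝ) (x : Path S) : OnePoint S :=
  if ∃ a : S, g a = 0 ∧ Tendsto x (leftFilter (exitTime g x)) (𝓝 (a : OnePoint S))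
  then leftLimValE x (exitTime g x) else evalE x (exitTime g x)

lemma terminalValue_ne_infty [T2Space (OnePoint S)] (hT : exitTime g x ≠ ⊤)
    (hxT : x (exitTime g x).toReal ≠ OnePoint.infty) : terminalValue g x ≠ OnePoint.infty := by
  unfold terminalValue
  split_ifs with h
  · obtain ⟨a, -, ha⟩ := h
    rw [leftLimValE_eq ha]
    exact OnePoint.coe_ne_infty a
  · rwa [evalE, if_neg hT]

lemma exists_tendsto_leftFilter_of_terminalValue_ne_infty (hx : IsDexp x)
    (h0 : IsBeforeExit g x 0) (h : terminalValue g x ≠ OnePoint.infty) :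
    ∃ a : S, Tendsto x (leftFilter (exitTime g x)) (𝓝 (a : OnePoint S)) := by
  unfold terminalValue at h
  split_ifs at h with hlim
  · obtain ⟨a, -, ha⟩ := hlim
    exact ⟨a, ha⟩
  · have hT : exitTime g x ≠ ⊤ := fun hT => h (by simp [evalE, hT])
    have hxT : x (exitTime g x).toReal ≠ OnePoint.infty := by simpa [evalE, hT] using h
    rw [leftFilter, if_neg hT]
    exact hx.2.2.2.2 _ ((isBeforeExit_iff hT).1 h0).2 hxT

lemma timeChange_of_Ag_eq (hg : Czero g) (hx : IsDexp x) (hs : IsBeforeExit g x s)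
    (hA : Ag g x s = ENNReal.ofReal t) : timeChange g x t = x s := by
  have ht : ENNReal.ofReal t < Atotal g x := hA ▸ hs.Ag_lt_Atotal hg hx
  rw [timeChange, if_neg fun h => h.2.1.not_gt ht, taug_ofReal_of_Ag_eq hg hx hs hA, evalE,
    if_neg ENNReal.ofReal_ne_top, ENNReal.toReal_ofReal hs.1]

lemma IsBeforeExit.timeChange_toReal_Ag (hg : Czero g) (hx : IsDexp x)
    (hs : IsBeforeExit g x s) : timeChange g x (Ag g x s).toReal = x s :=
  timeChange_of_Ag_eq hg hx hs (ENNReal.ofReal_toReal (hs.Ag_lt_top hg hx).ne).symm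

lemma exists_timeChange_eq (hg : Czero g) (hx : IsDexp x) (h0 : 0 ≤ t)
    (ht : ENNReal.ofReal t < Atotal g x) :
    ∃ s, IsBeforeExit g x s ∧ Ag g x s = ENNReal.ofReal t ∧ timeChange g x t = x s :=
  let ⟨s, hs, hA⟩ := exists_Ag_eq hg hx h0 ht
  ⟨s, hs, hA, timeChange_of_Ag_eq hg hx hs hA⟩

lemma timeChange_ne_infty (hg : Czero g) (hx : IsDexp x) (h0 : 0 ≤ t)
    (ht : ENNReal.ofReal t < Atotal g x) : timeChange g x t ≠ OnePoint.infty :=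
  let ⟨_, hs, _, hy⟩ := exists_timeChange_eq hg hx h0 ht
  hy ▸ hs.ne_infty

lemma timeChange_of_Atotal_le (hg : Czero g) (hx : IsDexp x) (h0 : 0 ≤ t)
    (ht : Atotal g x ≤ ENNReal.ofReal t) : timeChange g x t = terminalValue g x := by
  rw [timeChange, taug_ofReal_of_Atotal_le hg hx ht, terminalValue]
  by_cases h : ∃ a : S, g a = 0 ∧ Tendsto x (leftFilter (exitTime g x)) (𝓝 (a : OnePoint S))
  · rw [if_pos ⟨h0, ht, h⟩, if_pos h]
    rfl
  · rw [if_neg fun h' => h h'.2.2, if_neg h]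

lemma timeChange_of_nonpos [T2Space (OnePoint S)] (hg : Czero g) (hx : IsDexp x) (ht : t ≤ 0) :
    timeChange g x t = x 0 := by
  rw [timeChange]
  split_ifs with h
  · obtain ⟨-, hA, a, -, hlim⟩ := h
    have hA0 : Atotal g x = 0 := by simpa [ENNReal.ofReal_of_nonpos ht] using hA
    have hT : exitTime g x = 0 := by
      by_contra hT
      have h0 : IsBeforeExit g x 0 := ⟨le_rfl, by simpa [pos_iff_ne_zero] using hT⟩
      exact (h0.Ag_lt_Atotal hg hx).ne' (by rw [Ag_zero, hA0])
    have hlim' : Tendsto x (leftFilter 0) (𝓝 (a : OnePoint S)) := hT ▸ hlim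
    have hconst : Tendsto x (𝓝[<] 0) (𝓝 (x 0)) := tendsto_const_nhds.congr'
      (eventually_nhdsWithin_of_forall fun v hv => (hx.1 v (le_of_lt hv)).symm)
    change leftLimValE x (exitTime g x) = x 0
    rw [hT, leftLimValE_eq hlim']
    exact tendsto_nhds_unique (by simpa [leftFilter] using hlim') hconst
  · have hτ : taug g x (ENNReal.ofReal t) = 0 := by
      rw [ENNReal.ofReal_of_nonpos ht]
      exact le_antisymm ((iInf₂_le 0 ⟨le_rfl, zero_le⟩).trans_eq ENNReal.ofReal_zero) bot_le
    rw [hτ, evalE, if_neg ENNReal.zero_ne_top, ENNReal.toReal_zero]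

lemma timeChange_eq_timeChange_zero [T2Space (OnePoint S)] (hg : Czero g) (hx : IsDexp x)
    (ht : t ≤ 0) : timeChange g x t = timeChange g x 0 := by
  rw [timeChange_of_nonpos hg hx ht, timeChange_of_nonpos hg hx le_rfl]

lemma exists_timeChange_eq_of_Ag_lt (hg : Czero g) (hx : IsDexp x)
    (hct : Ag g x c < ENNReal.ofReal t) (ht : ENNReal.ofReal t < Atotal g x) :
    ∃ s, c < s ∧ IsBeforeExit g x s ∧ Ag g x s = ENNReal.ofReal t ∧ timeChange g x t = x s := by
  have h0 : 0 < t := ENNReal.ofReal_pos.1 (zero_le.trans_lt hct)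
  obtain ⟨s, hs, hA, hy⟩ := exists_timeChange_eq hg hx h0.le ht
  exact ⟨s, lt_of_Ag_lt hs.1 (hA ▸ hct), hs, hA, hy⟩

lemma tendsto_timeChange_nhdsGT_of_lt (hg : Czero g) (hx : IsDexp x) (h0 : 0 ≤ t)
    (ht : ENNReal.ofReal t < Atotal g x) :
    Tendsto (timeChange g x) (𝓝[>] t) (𝓝 (timeChange g x t)) := by
  obtain ⟨s, hs, hA, hy⟩ := exists_timeChange_eq hg hx h0 ht
  rw [hy]
  refine fun V hV => mem_map.2 ?_
  obtain ⟨d, hsd, hd⟩ := mem_nhdsGT_iff_exists_Ioo_subset.1 (hx.2.2.2.1 s hs.1 hs.ne_infty hV)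
  obtain ⟨r, hsr, hr⟩ := hs.exists_gt
  have hd' : IsBeforeExit g x (min d r) :=
    hr.mono (hs.1.trans (lt_min hsd hsr).le) (min_le_right _ _)
  have hAd : ENNReal.ofReal t < Ag g x (min d r) :=
    hA ▸ Ag_lt_Ag hg hx hs.1 (lt_min hsd hsr) hd'.2.le
  filter_upwards [Ioo_mem_nhdsGT ((ENNReal.ofReal_lt_iff_lt_toReal h0
    (hd'.Ag_lt_top hg hx).ne).1 hAd)] with t' ht'
  have h2 : ENNReal.ofReal t' < Ag g x (min d r) :=
    (ENNReal.ofReal_lt_iff_lt_toReal (h0.trans ht'.1.le) (hd'.Ag_lt_top hg hx).ne).2 ht'.2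
  obtain ⟨s', hss', -, hA', hy'⟩ := exists_timeChange_eq_of_Ag_lt hg hx
    (hA ▸ (ENNReal.ofReal_lt_ofReal_iff'.2 ⟨ht'.1, h0.trans_lt ht'.1⟩))
    (h2.trans (hd'.Ag_lt_Atotal hg hx))
  rw [mem_preimage, hy']
  exact hd ⟨hss', (lt_of_Ag_lt hd'.1 (hA' ▸ h2)).trans_le (min_le_left _ _)⟩

lemma exists_tendsto_timeChange_nhdsLT_of_lt (hg : Czero g) (hx : IsDexp x) (h0 : 0 < t)
    (ht : ENNReal.ofReal t < Atotal g x) :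
    ∃ a : S, Tendsto (timeChange g x) (𝓝[<] t) (𝓝 (a : OnePoint S)) := by
  obtain ⟨s, hs, hA, hy⟩ := exists_timeChange_eq hg hx h0.le ht
  have hspos : 0 < s := by
    refine hs.1.lt_of_ne fun h => ?_
    rw [← h, Ag_zero] at hA
    exact (ENNReal.ofReal_pos.2 h0).ne hA
  obtain ⟨a, -, hlim⟩ := hs.exists_tendsto_nhdsLT hspos
  refine ⟨a, fun V hV => mem_map.2 ?_⟩
  obtain ⟨c, hcs, hc⟩ := mem_nhdsLT_iff_exists_Ioo_subset.1 (hlim hV)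
  have hc0 : 0 ≤ max c 0 := le_max_right _ _
  have hAc : Ag g x (max c 0) < ENNReal.ofReal t :=
    hA ▸ Ag_lt_Ag hg hx hc0 (max_lt hcs hspos) hs.2.le
  have hfin : Ag g x (max c 0) ≠ ⊤ := ((hs.mono hc0 (max_lt hcs hspos).le).Ag_lt_top hg hx).ne
  filter_upwards [Ioo_mem_nhdsLT ((ENNReal.lt_ofReal_iff_toReal_lt hfin).1 hAc)] with t' ht'
  have htt' : ENNReal.ofReal t' < ENNReal.ofReal t := (ENNReal.ofReal_lt_ofReal_iff h0).2 ht'.2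
  obtain ⟨s', hcs', -, hA', hy'⟩ := exists_timeChange_eq_of_Ag_lt hg hx
    ((ENNReal.lt_ofReal_iff_toReal_lt hfin).2 ht'.1) (htt'.trans ht)
  rw [mem_preimage, hy']
  exact hc ⟨(le_max_left _ _).trans_lt hcs', lt_of_Ag_lt hs.1 (hA ▸ hA' ▸ htt')⟩

lemma exists_isBeforeExit_of_eventually_leftFilter {p : ℝ → Prop} (h0 : IsBeforeExit g x 0)
    (h : ∀ᶠ s in leftFilter (exitTime g x), p s) :
    ∃ c, IsBeforeExit g x c ∧ ∀ s, IsBeforeExit g x s → c < s → p s := by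
  unfold leftFilter at h
  split_ifs at h with hT
  · obtain ⟨c, hc⟩ := eventually_atTop.1 h
    exact ⟨max c 0, ⟨le_max_right _ _, hT ▸ ENNReal.ofReal_lt_top⟩,
      fun s _ hs => hc s ((le_max_left _ _).trans hs.le)⟩
  · obtain ⟨c, hcT, hc⟩ := mem_nhdsLT_iff_exists_Ioo_subset.1 h
    refine ⟨max c 0, (isBeforeExit_iff hT).2 ⟨le_max_right _ _,
      max_lt hcT ((isBeforeExit_iff hT).1 h0).2⟩, fun s hs hcs => hc ?_⟩
    exact ⟨(le_max_left _ _).trans_lt hcs, ((isBeforeExit_iff hT).1 hs).2⟩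

lemma tendsto_timeChange_nhdsLT_Atotal (hg : Czero g) (hx : IsDexp x) (h0 : IsBeforeExit g x 0)
    (hM : Atotal g x ≠ ⊤) {L : OnePoint S} (hL : Tendsto x (leftFilter (exitTime g x)) (𝓝 L)) :
    Tendsto (timeChange g x) (𝓝[<] (Atotal g x).toReal) (𝓝 L) := by
  refine fun V hV => mem_map.2 ?_
  obtain ⟨c, hc, hcV⟩ := exists_isBeforeExit_of_eventually_leftFilter h0 (hL hV)
  have hfin : Ag g x c ≠ ⊤ := (hc.Ag_lt_top hg hx).ne
  filter_upwards [Ioo_mem_nhdsLT (ENNReal.toReal_strict_mono hM (hc.Ag_lt_Atotal hg hx))]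
    with t' ht'
  obtain ⟨s', hcs', hs', -, hy'⟩ := exists_timeChange_eq_of_Ag_lt hg hx
    ((ENNReal.lt_ofReal_iff_toReal_lt hfin).2 ht'.1)
    ((ENNReal.ofReal_lt_iff_lt_toReal (ENNReal.toReal_nonneg.trans ht'.1.le) hM).2 ht'.2)
  rw [mem_preimage, hy']
  exact hcV s' hs' hcs'

lemma tendsto_timeChange_nhdsGT (hg : Czero g) (hx : IsDexp x) (h0 : 0 ≤ t) :
    Tendsto (timeChange g x) (𝓝[>] t) (𝓝 (timeChange g x t)) := by
  rcases lt_or_ge (ENNReal.ofReal t) (Atotal g x) with ht | ht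
  · exact tendsto_timeChange_nhdsGT_of_lt hg hx h0 ht
  · rw [timeChange_of_Atotal_le hg hx h0 ht]
    refine tendsto_const_nhds.congr' (eventually_nhdsWithin_of_forall fun t' ht' => ?_)
    exact (timeChange_of_Atotal_le hg hx (h0.trans (le_of_lt ht'))
      (ht.trans (ENNReal.ofReal_le_ofReal (le_of_lt ht')))).symm

lemma exists_tendsto_timeChange_nhdsLT [T2Space (OnePoint S)] (hg : Czero g) (hx : IsDexp x)
    (h0 : 0 < t) (hne : timeChange g x t ≠ OnePoint.infty) :
    ∃ a : S, Tendsto (timeChange g x) (𝓝[<] t) (𝓝 (a : OnePoint S)) := by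
  rcases lt_trichotomy (ENNReal.ofReal t) (Atotal g x) with ht | ht | ht
  · exact exists_tendsto_timeChange_nhdsLT_of_lt hg hx h0 ht
  · have hM : Atotal g x ≠ ⊤ := ht ▸ ENNReal.ofReal_ne_top
    have hzero : IsBeforeExit g x 0 :=
      isBeforeExit_zero_of_Atotal_ne_zero (ht ▸ (ENNReal.ofReal_pos.2 h0).ne')
    rw [timeChange_of_Atotal_le hg hx h0.le ht.ge] at hne
    obtain ⟨a, ha⟩ := exists_tendsto_leftFilter_of_terminalValue_ne_infty hx hzero hne
    refine ⟨a, ?_⟩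
    rw [← ENNReal.toReal_ofReal h0.le, ht]
    exact tendsto_timeChange_nhdsLT_Atotal hg hx hzero hM ha
  · have hM : Atotal g x ≠ ⊤ := ne_top_of_lt ht
    obtain ⟨a, ha⟩ := OnePoint.ne_infty_iff_exists.1 hne
    refine ⟨a, tendsto_const_nhds.congr' ?_⟩
    have hMt : (Atotal g x).toReal < t := (ENNReal.toReal_lt_toReal hM ENNReal.ofReal_ne_top).2 ht
      |>.trans_eq (ENNReal.toReal_ofReal h0.le)
    filter_upwards [Ioo_mem_nhdsLT hMt] with t' ht'
    have hle : Atotal g x ≤ ENNReal.ofReal t' :=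
      (ENNReal.le_ofReal_iff_toReal_le hM (ENNReal.toReal_nonneg.trans ht'.1.le)).2 ht'.1.le
    rw [ha, timeChange_of_Atotal_le hg hx (ENNReal.toReal_nonneg.trans ht'.1.le) hle,
      ← timeChange_of_Atotal_le hg hx h0.le (hle.trans (ENNReal.ofReal_le_ofReal ht'.2.le))]

lemma timeChange_eq_infty_of_le [T2Space (OnePoint S)] (hg : Czero g) (hx : IsDexp x)
    (hst : s ≤ t) (hs : timeChange g x s = OnePoint.infty) : timeChange g x t = OnePoint.infty := by
  have hneg := fun t (ht : t ≤ 0) => timeChange_eq_timeChange_zero hg hx ht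
  rcases lt_or_ge t 0 with ht | ht
  · rw [hneg t ht.le, ← hneg s (hst.trans ht.le), hs]
  have hs' : timeChange g x (max s 0) = OnePoint.infty := by
    rcases le_total s 0 with h | h
    · rwa [max_eq_right h, ← hneg s h]
    · rwa [max_eq_left h]
  have hM : Atotal g x ≤ ENNReal.ofReal (max s 0) :=
    not_lt.1 fun h => timeChange_ne_infty hg hx (le_max_right _ _) h hs'
  rw [timeChange_of_Atotal_le hg hx ht (hM.trans (ENNReal.ofReal_le_ofReal (max_le hst ht))),
    ← timeChange_of_Atotal_le hg hx (le_max_right _ _) hM, hs']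

theorem isDexp_timeChange [T2Space (OnePoint S)] (hg : Czero g) (hx : IsDexp x) :
    IsDexp (timeChange g x) := by
  have hneg := fun t (ht : t ≤ 0) => timeChange_eq_timeChange_zero hg hx ht
  have hmono := fun s t (hst : s ≤ t) => timeChange_eq_infty_of_le hg hx hst
  have hrc := fun t (h0 : 0 ≤ t) (_ : timeChange g x t ≠ OnePoint.infty) =>
    tendsto_timeChange_nhdsGT hg hx h0
  exact ⟨hneg, hmono, isClosed_xiSet hneg hmono hrc, hrc,
    fun t h0 hne => exists_tendsto_timeChange_nhdsLT hg hx h0 hne⟩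

lemma IsBeforeExit.mem_pathRange_timeChange (hg : Czero g) (hx : IsDexp x)
    (hs : IsBeforeExit g x s) {a : S} (ha : x s = (a : OnePoint S)) :
    a ∈ pathRange (timeChange g x) :=
  ⟨(Ag g x s).toReal, ENNReal.toReal_nonneg, by rw [hs.timeChange_toReal_Ag hg hx, ha]⟩

lemma exitTime_ne_top (hg : Czero g) (hx : IsDexp x) (hM : Atotal g x ≠ ⊤) {C : ℝ}
    (hC : ∀ a ∈ pathRange (timeChange g x), g a ≤ C) : exitTime g x ≠ ⊤ := by
  intro hT
  refine hM (Atotal_eq_top_of_le hT (C := C) fun u hu => ?_)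
  have hu' : IsBeforeExit g x u := ⟨hu, hT ▸ ENNReal.ofReal_lt_top⟩
  obtain ⟨a, -, ha⟩ := hu'.exists_eq_coe
  rw [ha]
  exact hC a (hu'.mem_pathRange_timeChange hg hx ha)

theorem isDglob_timeChange [T2Space (OnePoint S)] (hg : Czero g) (hC : ∃ C, ∀ a, g a ≤ C)
    (hx : IsDglob x) : IsDglob (timeChange g x) := by
  refine ⟨isDexp_timeChange hg hx.1, fun t => ?_⟩
  rcases le_or_gt t 0 with ht | ht
  · rw [timeChange_of_nonpos hg hx.1 ht]
    exact hx.2 0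
  rcases lt_or_ge (ENNReal.ofReal t) (Atotal g x) with hlt | hge
  · exact timeChange_ne_infty hg hx.1 ht.le hlt
  obtain ⟨C, hC⟩ := hC
  have hT : exitTime g x ≠ ⊤ :=
    exitTime_ne_top hg hx.1 (ne_top_of_le_ne_top ENNReal.ofReal_ne_top hge) fun a _ => hC a
  rw [timeChange_of_Atotal_le hg hx.1 ht.le hge]
  exact terminalValue_ne_infty hT (hx.2 _)

lemma xiR_timeChange [T2Space (OnePoint S)] (hg : Czero g) (hx : IsDexp x)
    (hexp : explodes (timeChange g x)) (hpos : 0 < xiR (timeChange g x)) :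
    Atotal g x ≠ ⊤ ∧ xiR (timeChange g x) = (Atotal g x).toReal := by
  have hξ := xiSet_eq_Ici (isDexp_timeChange hg hx) hexp hpos
  have hyξ : timeChange g x (xiR (timeChange g x)) = OnePoint.infty :=
    (hξ ▸ self_mem_Ici : xiR (timeChange g x) ∈ xiSet (timeChange g x))
  have hMξ : Atotal g x ≤ ENNReal.ofReal (xiR (timeChange g x)) :=
    not_lt.1 fun h => timeChange_ne_infty hg hx hpos.le h hyξ
  have hM : Atotal g x ≠ ⊤ := ne_top_of_le_ne_top ENNReal.ofReal_ne_top hMξ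
  refine ⟨hM, le_antisymm ?_ (ENNReal.toReal_le_of_le_ofReal hpos.le hMξ)⟩
  suffices (Atotal g x).toReal ∈ xiSet (timeChange g x) by rwa [hξ] at this
  change timeChange g x _ = _
  rw [timeChange_of_Atotal_le hg hx ENNReal.toReal_nonneg (ENNReal.ofReal_toReal hM).ge,
    ← timeChange_of_Atotal_le hg hx hpos.le hMξ, hyξ]

lemma xiR_eq_exitTime (hx : IsDexp x) (h0 : IsBeforeExit g x 0) (hT : exitTime g x ≠ ⊤)
    (hxT : x (exitTime g x).toReal = OnePoint.infty) : xiR x = (exitTime g x).toReal := by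
  have hset : xiSet x = Ici (exitTime g x).toReal := by
    ext s
    refine ⟨fun (hs : x s = _) => mem_Ici.2 (not_lt.1 fun hlt => ?_), fun hs => hx.2.1 hs hxT⟩
    rcases le_or_gt 0 s with h | h
    · exact ((isBeforeExit_iff hT).2 ⟨h, hlt⟩).ne_infty hs
    · exact h0.ne_infty (hx.1 s h.le ▸ hs)
  rw [xiR, hset, csInf_Ici]

lemma pathRange_subset_pathRange_timeChange (hg : Czero g) (hx : IsDexp x)
    (hT : exitTime g x ≠ ⊤) (hxT : x (exitTime g x).toReal = OnePoint.infty) :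
    pathRange x ⊆ pathRange (timeChange g x) := by
  rintro a ⟨s, hs0, ha⟩
  have hs : IsBeforeExit g x s := (isBeforeExit_iff hT).2 ⟨hs0, not_le.1 fun h => by
    rw [hx.2.1 h hxT] at ha
    exact OnePoint.infty_ne_coe a ha⟩
  exact hs.mem_pathRange_timeChange hg hx ha

theorem isDloc_timeChange [T2Space (OnePoint S)] (hg : CzeroLocBdd g) (hx : IsDloc x) :
    IsDloc (timeChange g x) := by
  refine ⟨isDexp_timeChange hg.1 hx.1, fun ⟨hexp, hpos, hK⟩ => ?_⟩
  obtain ⟨hM, hξ⟩ := xiR_timeChange hg.1 hx.1 hexp hpos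
  have h0 : IsBeforeExit g x 0 := isBeforeExit_zero_of_Atotal_ne_zero fun h => by
    rw [h, ENNReal.toReal_zero] at hξ
    exact hpos.ne' hξ
  suffices ∃ a : S, Tendsto x (leftFilter (exitTime g x)) (𝓝 (a : OnePoint S)) by
    obtain ⟨a, ha⟩ := this
    exact ⟨a, hξ ▸ tendsto_timeChange_nhdsLT_Atotal hg.1 hx.1 h0 hM ha⟩
  obtain ⟨C, hC⟩ := hg.2 _ hK
  have hT : exitTime g x ≠ ⊤ := exitTime_ne_top hg.1 hx.1 hM fun a ha => hC a (subset_closure ha)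
  have hTpos := ((isBeforeExit_iff hT).1 h0).2
  rw [leftFilter, if_neg hT]
  by_cases hxT : x (exitTime g x).toReal = OnePoint.infty
  · have hξx := xiR_eq_exitTime hx.1 h0 hT hxT
    rw [← hξx]
    exact hx.2 ⟨⟨_, hxT⟩, hξx ▸ hTpos, hK.of_isClosed_subset isClosed_closure
      (closure_mono (pathRange_subset_pathRange_timeChange hg.1 hx.1 hT hxT))⟩
  · exact hx.1.2.2.2.2 _ hTpos hxT

end TimeChange

theorem timeChange_mem_general
    {S : Type*} [MetricSpace S] [LocallyCompactSpace S] :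
    (∀ g : S → ℝ, Czero g → (∃ C : ℝ, ∀ a : S, g a ≤ C) →
      ∀ x : Path S, IsDglob x → IsDglob (timeChange g x)) ∧
    (∀ g : S → ℝ, CzeroLocBdd g →
      ∀ x : Path S, IsDloc x → IsDloc (timeChange g x)) :=
  ⟨fun _ hg hC _ hx => isDglob_timeChange hg hC hx, fun _ hg _ hx => isDloc_timeChange hg hx⟩

/-- Proposition 3.2, 3. and 4.. (i) If `g ∈ C^{≠0}(S,ℝ₊)` is bounded and
`x ∈ 𝔻(S)`, then `g·x ∈ 𝔻(S)`.  (ii) If `g ∈ C̃^{≠0}(S,ℝ₊)` and `x ∈ 𝔻_loc(S)`, then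
`g·x ∈ 𝔻_loc(S)`. -/
theorem timeChange_mem
    {S : Type*} [MetricSpace S] [SecondCountableTopology S] [LocallyCompactSpace S] :
    (∀ g : S → ℝ, Czero g → (∃ C : ℝ, ∀ a : S, g a ≤ C) →
      ∀ x : Path S, IsDglob x → IsDglob (timeChange g x)) ∧
    (∀ g : S → ℝ, CzeroLocBdd g →
      ∀ x : Path S, IsDloc x → IsDloc (timeChange g x)) :=
  timeChange_mem_general

end LocSkor
end
end
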